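/- arXiv:1904.05852 — 11 statements merged into one kernel-verified Lean document; each statement's English description precedes it below -/
import Mathlib

section
/- Let (Y, π, ≤) be a compact ordered space and S ⊆ Y. The following are equivalent: (1) S is π-closed and an upper set; (2) S is compact with respect to the topology π^↑ and saturated with respect to π^↑ (i.e., S is an intersection of π-open upper sets); (3) S is closed in the topology π^↓, i.e., Y ∖ S is a π-open lower set. -/
/-- The *upper topology* `π^↑` associated to a topology and a preorder:
its open sets are exactly the open upper sets. -/
def upTop (Y : Type*) [TopologicalSpace Y] [Preorder Y] : TopologicalSpace Y where
  IsOpen U := IsOpen U ∧ IsUpperSet U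
  isOpen_univ := ⟨isOpen_univ, isUpperSet_univ⟩
  isOpen_inter := fun _ _ hU hV => ⟨hU.1.inter hV.1, hU.2.inter hV.2⟩
  isOpen_sUnion := fun _ hS =>
    ⟨isOpen_sUnion fun U hU => (hS U hU).1, isUpperSet_sUnion fun U hU => (hS U hU).2⟩

section Aux
variable {Y : Type*} [TopologicalSpace Y] [CompactSpace Y] [T2Space Y]
  [Preorder Y] [OrderClosedTopology Y]

lemma isClosed_lowerClosure' {K : Set Y} (hK : IsClosed K) :
    IsClosed (↑(lowerClosure K) : Set Y) := by
  have h1 : IsClosed ({p : Y × Y | p.1 ≤ p.2} ∩ Set.univ ×ˢ K) :=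
    isClosed_le_prod.inter (isClosed_univ.prod hK)
  have := isClosedMap_fst_of_compactSpace (X := Y) (Y := Y) _ h1
  convert this using 1
  ext x
  simp only [lowerClosure, Set.mem_image, Set.mem_inter_iff, Set.mem_setOf_eq,
    Set.mem_prod, Set.mem_univ, true_and]
  constructor
  · rintro ⟨k, hk, hxk⟩; exact ⟨(x, k), ⟨hxk, hk⟩, rfl⟩
  · rintro ⟨⟨a, b⟩, ⟨hab, hb⟩, rfl⟩; exact ⟨b, hb, hab⟩

lemma isClosed_upperClosure' {K : Set Y} (hK : IsClosed K) :
    IsClosed (↑(upperClosure K) : Set Y) := by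
  have h1 : IsClosed ({p : Y × Y | p.1 ≤ p.2} ∩ K ×ˢ Set.univ) :=
    isClosed_le_prod.inter (hK.prod isClosed_univ)
  have := isClosedMap_snd_of_compactSpace (X := Y) (Y := Y) _ h1
  convert this using 1
  ext x
  simp only [upperClosure, Set.mem_image, Set.mem_inter_iff, Set.mem_setOf_eq,
    Set.mem_prod, Set.mem_univ, and_true]
  constructor
  · rintro ⟨k, hk, hkx⟩; exact ⟨(k, x), ⟨hkx, hk⟩, rfl⟩
  · rintro ⟨⟨a, b⟩, ⟨hab, ha⟩, rfl⟩; exact ⟨a, ha, hab⟩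

lemma nachbin_sep {x y : Y} (h : ¬ x ≤ y) :
    ∃ U V : Set Y, IsOpen U ∧ IsUpperSet U ∧ IsOpen V ∧ IsLowerSet V ∧
      x ∈ U ∧ y ∈ V ∧ Disjoint U V := by
  have hd : Disjoint (Set.Ici x) (Set.Iic y) := by
    rw [Set.disjoint_left]
    intro z hz1 hz2
    exact h (le_trans hz1 hz2)
  obtain ⟨W1, W2, hW1, hW2, hIW1, hIW2, hW12⟩ :=
    NormalSpace.normal (Set.Ici x) (Set.Iic y) isClosed_Ici isClosed_Iic hd
  refine ⟨(↑(lowerClosure W1ᶜ))ᶜ, (↑(upperClosure W2ᶜ))ᶜ,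
    (isClosed_lowerClosure' hW1.isClosed_compl).isOpen_compl,
    (lowerClosure W1ᶜ).lower.compl,
    (isClosed_upperClosure' hW2.isClosed_compl).isOpen_compl,
    (upperClosure W2ᶜ).upper.compl, ?_, ?_, ?_⟩
  · intro hx
    obtain ⟨k, hk, hxk⟩ := hx
    exact hk (hIW1 hxk)
  · intro hy
    obtain ⟨k, hk, hky⟩ := hy
    exact hk (hIW2 hky)
  · rw [Set.disjoint_left]
    intro z hz1 hz2
    have hz1' : z ∈ W1 := by
      by_contra hc
      exact hz1 (subset_lowerClosure hc)
    have hz2' : z ∈ W2 := by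
      by_contra hc
      exact hz2 (subset_upperClosure hc)
    exact Set.disjoint_left.mp hW12 hz1' hz2'

end Aux

/-- In a compact ordered space `(Y, π, ≤)` (compact Hausdorff with closed order),
for a set `S` the following are equivalent: (1) `S` is `π`-closed and an upper set;
(2) `S` is compact and saturated with respect to `π^↑`;
(3) `Y \ S` is a `π`-open lower set, i.e. `S` is `π^↓`-closed. -/
theorem stmt0 {Y : Type*} [TopologicalSpace Y] [CompactSpace Y] [T2Space Y]
    [PartialOrder Y] [OrderClosedTopology Y] (S : Set Y) :
    List.TFAE
      [IsClosed S ∧ IsUpperSet S,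
       @IsCompact Y (upTop Y) S ∧
         ∃ 𝒰 : Set (Set Y), (∀ U ∈ 𝒰, IsOpen U ∧ IsUpperSet U) ∧ S = ⋂₀ 𝒰,
       IsOpen Sᶜ ∧ IsLowerSet Sᶜ] := by
  tfae_have 1 → 2 := by
    rintro ⟨hcl, hup⟩
    constructor
    · have hc : IsCompact S := hcl.isCompact
      have hle : (‹TopologicalSpace Y› : TopologicalSpace Y) ≤ upTop Y := by
        rw [TopologicalSpace.le_def]
        intro U hU
        exact hU.1
      have := @IsCompact.image Y Y _ (upTop Y) S id hc (continuous_id_of_le hle)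
      simpa using this
    · refine ⟨(fun y => (Set.Iic y)ᶜ) '' Sᶜ, ?_, ?_⟩
      · rintro U ⟨y, _, rfl⟩
        exact ⟨isClosed_Iic.isOpen_compl, (isLowerSet_Iic _).compl⟩
      · ext x
        simp only [Set.mem_sInter, Set.mem_image, Set.mem_compl_iff, Set.mem_Iic]
        constructor
        · rintro hx U ⟨y, hy, rfl⟩
          intro (hxy : x ≤ y)
          exact hy (hup hxy hx)
        · intro h
          by_contra hx
          exact h (Set.Iic x)ᶜ ⟨x, hx, rfl⟩ le_rfl
  tfae_have 2 → 3 := by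
    rintro ⟨hcpt, 𝒰, h𝒰, hS⟩
    constructor
    · rw [isOpen_iff_forall_mem_open]
      intro y hy
      obtain ⟨U, hU𝒰, hyU⟩ : ∃ U ∈ 𝒰, y ∉ U := by
        by_contra hc
        push_neg at hc
        exact hy (hS ▸ Set.mem_sInter.mpr hc)
      have hSU : S ⊆ U := hS ▸ Set.sInter_subset_of_mem hU𝒰
      have hkey : ∀ s ∈ S, ¬ s ≤ y := fun s hs hsy =>
        hyU ((h𝒰 U hU𝒰).2 hsy (hSU hs))
      choose! A B hA hAu hB hBl hsA hyB hAB using fun s (hs : s ∈ S) =>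
        nachbin_sep (hkey s hs)
      have hcover : S ⊆ ⋃ s : S, A s := fun s hs =>
        Set.mem_iUnion.mpr ⟨⟨s, hs⟩, hsA s hs⟩
      obtain ⟨t, ht⟩ := @IsCompact.elim_finite_subcover Y (upTop Y) S S hcpt
        (fun s : S => A s) (fun s => ⟨hA s s.2, hAu s s.2⟩) hcover
      refine ⟨⋂ s ∈ t, B s, ?_, ?_, ?_⟩
      · intro z hz hzS
        obtain ⟨s, hst, hsz⟩ := Set.mem_iUnion₂.mp (ht hzS)
        have hzB : z ∈ B s := Set.mem_iInter₂.mp hz s hst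
        exact Set.disjoint_left.mp (hAB s s.2) hsz hzB
      · exact isOpen_biInter_finset fun s _ => hB s s.2
      · exact Set.mem_iInter₂.mpr fun s _ => hyB s s.2
    · have : IsUpperSet S := hS ▸ isUpperSet_sInter fun U hU => (h𝒰 U hU).2
      exact this.compl
  tfae_have 3 → 1 := by
    rintro ⟨ho, hl⟩
    exact ⟨isOpen_compl_iff.mp ho, by simpa using hl.compl⟩
  tfae_finish
end

section
/- Let Y be a locally compact topological space (every point has a neighborhood basis of compact sets), let K ⊆ Y be compact and saturated, and let V_1, …, V_n be open sets with K ⊆ V_1 ∪ ⋯ ∪ V_n. Then there exist open sets U_1, …, U_n and compact saturated sets K_1, …, K_n such that K ⊆ U_1 ∪ ⋯ ∪ U_n and U_i ⊆ K_i ⊆ V_i for each i = 1, …, n. -/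
open Topology


/-- A subset of a topological space is *saturated* if it is an intersection of open sets. -/
def Saturated {Y : Type*} [TopologicalSpace Y] (S : Set Y) : Prop :=
  ∃ 𝒰 : Set (Set Y), (∀ U ∈ 𝒰, IsOpen U) ∧ S = ⋂₀ 𝒰

/-- The saturation of a set: intersection of all open sets containing it. -/
def satn {Y : Type*} [TopologicalSpace Y] (S : Set Y) : Set Y :=
  ⋂₀ {U | IsOpen U ∧ S ⊆ U}

lemma subset_satn {Y : Type*} [TopologicalSpace Y] (S : Set Y) : S ⊆ satn S := by
  intro x hx
  exact fun U hU => hU.2 hx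

lemma satn_subset {Y : Type*} [TopologicalSpace Y] {S U : Set Y} (hU : IsOpen U)
    (hSU : S ⊆ U) : satn S ⊆ U :=
  Set.sInter_subset_of_mem ⟨hU, hSU⟩

lemma saturated_satn {Y : Type*} [TopologicalSpace Y] (S : Set Y) : Saturated (satn S) :=
  ⟨{U | IsOpen U ∧ S ⊆ U}, fun _ hU => hU.1, rfl⟩

lemma isCompact_satn {Y : Type*} [TopologicalSpace Y] {S : Set Y} (hS : IsCompact S) :
    IsCompact (satn S) := by
  rw [isCompact_iff_finite_subcover] at hS ⊢
  intro ι W hW hsub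
  obtain ⟨t, ht⟩ := hS W hW ((subset_satn S).trans hsub)
  exact ⟨t, satn_subset (isOpen_iUnion fun i => isOpen_iUnion fun _ => hW i) ht⟩

/-- Wilker's condition for locally compact spaces: a finite open cover of a compact
saturated set can be refined by an open cover `U i` together with interpolating compact
saturated sets `U i ⊆ L i ⊆ V i`. -/
theorem stmt1 {Y : Type*} [TopologicalSpace Y] [LocallyCompactSpace Y]
    {K : Set Y} (hK : IsCompact K) (hKsat : Saturated K)
    (n : ℕ) (V : Fin n → Set Y) (hV : ∀ i, IsOpen (V i)) (hKV : K ⊆ ⋃ i, V i) :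
    ∃ U L : Fin n → Set Y,
      K ⊆ ⋃ i, U i ∧
      ∀ i, IsOpen (U i) ∧ IsCompact (L i) ∧ Saturated (L i) ∧ U i ⊆ L i ∧ L i ⊆ V i := by
  classical
  cases n with
  | zero =>
      refine ⟨fun _ => ∅, fun _ => ∅, ?_, fun i => i.elim0⟩
      simpa using hKV
  | succ m =>
  have h : ∀ x ∈ K, ∃ (i : Fin (m + 1)) (C : Set Y), IsCompact C ∧ C ∈ 𝓝 x ∧ C ⊆ V i := by
    intro x hx
    obtain ⟨i, hi⟩ := Set.mem_iUnion.mp (hKV hx)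
    obtain ⟨C, hCn, hCV, hCc⟩ := local_compact_nhds ((hV i).mem_nhds hi)
    exact ⟨i, C, hCc, hCn, hCV⟩
  choose! idx C hCc hCn hCV using h
  obtain ⟨t, htK, ht⟩ := hK.elim_nhds_subcover (fun x => interior (C x))
    (fun x hx => interior_mem_nhds.mpr (hCn x hx))
  refine ⟨fun i => ⋃ x ∈ t.filter (fun x => idx x = i), interior (C x),
    fun i => satn (⋃ x ∈ t.filter (fun x => idx x = i), C x), ?_, fun i => ?_⟩
  · intro y hy
    obtain ⟨x, hxt, hyx⟩ := Set.mem_iUnion₂.mp (ht hy)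
    refine Set.mem_iUnion.mpr ⟨idx x, Set.mem_iUnion₂.mpr ⟨x, ?_, hyx⟩⟩
    simp [Finset.mem_filter, hxt]
  · have hbase : (⋃ x ∈ t.filter (fun x => idx x = i), C x) ⊆ V i := by
      intro y hy
      obtain ⟨x, hxt, hyx⟩ := Set.mem_iUnion₂.mp hy
      obtain ⟨hxt', hxi⟩ := Finset.mem_filter.mp hxt
      exact hxi ▸ hCV x (htK x hxt') hyx
    have hcomp : IsCompact (⋃ x ∈ t.filter (fun x => idx x = i), C x) :=
      (t.filter (fun x => idx x = i)).finite_toSet.isCompact_biUnion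
        (fun x hx => hCc x (htK x (Finset.mem_filter.mp hx).1))
    refine ⟨isOpen_biUnion fun _ _ => isOpen_interior, isCompact_satn hcomp,
      saturated_satn _, ?_, satn_subset (hV i) hbase⟩
    refine (Set.iUnion₂_mono fun x _ => interior_subset).trans (subset_satn _)
end

section
/- Let (Y, π, ≤) be a compact ordered space, let K_1, …, K_n be compact saturated subsets of Y^↑, and let U be a π^↑-open set with K_1 ∩ ⋯ ∩ K_n ⊆ U. Then there exist compact saturated subsets L_1, …, L_n of Y^↑ such that K_i ≺ L_i for each i = 1, …, n and L_1 ∩ ⋯ ∩ L_n ⊆ U. -/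
/-- `K` is compact and saturated with respect to the upper topology `π^↑`. -/
def CompSatUp {Y : Type*} [TopologicalSpace Y] [Preorder Y] (K : Set Y) : Prop :=
  @IsCompact Y (upTop Y) K ∧
    ∃ 𝒰 : Set (Set Y), (∀ U ∈ 𝒰, IsOpen U ∧ IsUpperSet U) ∧ K = ⋂₀ 𝒰

/-- `K ≺ K'` for compact saturated subsets of `Y^↑`: there is a `π^↑`-open set
(i.e. a `π`-open upper set) `U` with `K ⊆ U ⊆ K'`. -/
def WayBelow {Y : Type*} [TopologicalSpace Y] [Preorder Y] (K K' : Set Y) : Prop :=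
  ∃ U : Set Y, IsOpen U ∧ IsUpperSet U ∧ K ⊆ U ∧ U ⊆ K'

section Aux
variable {Y : Type*} [TopologicalSpace Y] [CompactSpace Y] [T2Space Y]
    [PartialOrder Y] [OrderClosedTopology Y]

lemma myLe_closed : IsClosed {p : Y × Y | p.1 ≤ p.2} :=
  OrderClosedTopology.isClosed_le'

/-- down-closure of a closed set is closed -/
lemma myDownClosed {C : Set Y} (hC : IsClosed C) :
    IsClosed {y : Y | ∃ c ∈ C, y ≤ c} := by
  have h : {y : Y | ∃ c ∈ C, y ≤ c} =
      Prod.fst '' ({p : Y × Y | p.1 ≤ p.2} ∩ Set.univ ×ˢ C) := by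
    ext y
    constructor
    · rintro ⟨c, hc, hyc⟩; exact ⟨(y, c), ⟨hyc, trivial, hc⟩, rfl⟩
    · rintro ⟨⟨a, b⟩, ⟨hab, -, hb⟩, rfl⟩; exact ⟨b, hb, hab⟩
  rw [h]
  exact (((myLe_closed.inter (isClosed_univ.prod hC)).isCompact).image
    continuous_fst).isClosed

lemma myUpClosed {C : Set Y} (hC : IsClosed C) :
    IsClosed {y : Y | ∃ c ∈ C, c ≤ y} := by
  have h : {y : Y | ∃ c ∈ C, c ≤ y} =
      Prod.snd '' ({p : Y × Y | p.1 ≤ p.2} ∩ C ×ˢ Set.univ) := by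
    ext y
    constructor
    · rintro ⟨c, hc, hyc⟩; exact ⟨(c, y), ⟨hyc, hc, trivial⟩, rfl⟩
    · rintro ⟨⟨a, b⟩, ⟨hab, ha, -⟩, rfl⟩; exact ⟨a, ha, hab⟩
  rw [h]
  exact (((myLe_closed.inter (hC.prod isClosed_univ)).isCompact).image
    continuous_snd).isClosed

/-- Nachbin separation for closed upper / closed lower -/
lemma mySep {A B : Set Y} (hA : IsClosed A) (hAu : IsUpperSet A)
    (hB : IsClosed B) (hBl : IsLowerSet B) (hAB : Disjoint A B) :
    ∃ U V : Set Y, IsOpen U ∧ IsUpperSet U ∧ IsOpen V ∧ IsLowerSet V ∧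
      A ⊆ U ∧ B ⊆ V ∧ Disjoint U V := by
  have hsub : A ×ˢ B ⊆ {p : Y × Y | p.1 ≤ p.2}ᶜ := by
    rintro ⟨a, b⟩ ⟨ha, hb⟩ (h : a ≤ b)
    exact (Set.disjoint_left.1 hAB) (hAu h ha) hb
  obtain ⟨u, v, huo, hvo, hAu', hBv', huv⟩ :=
    generalized_tube_lemma hA.isCompact hB.isCompact myLe_closed.isOpen_compl hsub
  -- no x ∈ u, y ∈ v with x ≤ y
  have hno : ∀ x ∈ u, ∀ y ∈ v, ¬ x ≤ y := fun x hx y hy h =>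
    huv (Set.mk_mem_prod hx hy) h
  refine ⟨{y : Y | ∃ c ∈ uᶜ, y ≤ c}ᶜ, {y : Y | ∃ c ∈ vᶜ, c ≤ y}ᶜ,
    (myDownClosed huo.isClosed_compl).isOpen_compl, ?_,
    (myUpClosed hvo.isClosed_compl).isOpen_compl, ?_, ?_, ?_, ?_⟩
  · intro a b hab ha hb
    obtain ⟨c, hc, hbc⟩ := hb
    exact ha ⟨c, hc, hab.trans hbc⟩
  · intro a b hab hb ha
    obtain ⟨c, hc, hca⟩ := ha
    exact hb ⟨c, hc, hca.trans hab⟩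
  · intro a ha ⟨c, hc, hac⟩
    exact hc (hAu' (hAu hac ha))
  · intro b hb ⟨c, hc, hcb⟩
    exact hc (hBv' (hBl hcb hb))
  · rw [Set.disjoint_left]
    intro z hz hz'
    have hzu : z ∈ u := by by_contra h; exact hz ⟨z, h, le_refl z⟩
    have hzv : z ∈ v := by by_contra h; exact hz' ⟨z, h, le_refl z⟩
    exact hno z hzu z hzv (le_refl z)

lemma myIci_closed (x : Y) : IsClosed (Set.Ici x) := by
  have : Set.Ici x = (fun y => (x, y)) ⁻¹' {p : Y × Y | p.1 ≤ p.2} := rfl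
  rw [this]; exact myLe_closed.preimage (Continuous.prodMk_right x)

lemma myIic_closed (x : Y) : IsClosed (Set.Iic x) := by
  have : Set.Iic x = (fun y => (y, x)) ⁻¹' {p : Y × Y | p.1 ≤ p.2} := rfl
  rw [this]; exact myLe_closed.preimage (Continuous.prodMk_left x)

end Aux
set_option linter.unusedSectionVars false

section Main
variable {Y : Type*} [TopologicalSpace Y] [CompactSpace Y] [T2Space Y]
    [PartialOrder Y] [OrderClosedTopology Y]

lemma upTop_isOpen {s : Set Y} : @IsOpen Y (upTop Y) s ↔ IsOpen s ∧ IsUpperSet s :=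
  Iff.rfl

/-- a compact saturated set for the upper topology is closed and upper -/
lemma compSatUp_closed_upper {A : Set Y} (h : CompSatUp A) :
    IsClosed A ∧ IsUpperSet A := by
  obtain ⟨hcomp, 𝒰, h𝒰, hAeq⟩ := h
  have hup : IsUpperSet A := by
    subst hAeq
    exact isUpperSet_sInter fun W hW => (h𝒰 W hW).2
  refine ⟨?_, hup⟩
  rw [← isOpen_compl_iff, isOpen_iff_forall_mem_open]
  intro y hy
  -- for each x ∈ A, ¬ x ≤ y
  have hsep : ∀ x ∈ A, ∃ V W : Set Y, IsOpen V ∧ IsUpperSet V ∧ IsOpen W ∧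
      IsLowerSet W ∧ x ∈ V ∧ y ∈ W ∧ Disjoint V W := by
    intro x hx
    have hxy : ¬ x ≤ y := fun h => hy (hup h hx)
    have hdisj : Disjoint (Set.Ici x) (Set.Iic y) := by
      rw [Set.disjoint_left]
      exact fun z hz hz' => hxy (le_trans hz hz')
    obtain ⟨V, W, hVo, hVu, hWo, hWl, hV, hW, hVW⟩ :=
      mySep (myIci_closed x) (isUpperSet_Ici x) (myIic_closed y) (isLowerSet_Iic y) hdisj
    exact ⟨V, W, hVo, hVu, hWo, hWl, hV le_rfl, hW le_rfl, hVW⟩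
  choose V W hVo hVu hWo hWl hV hW hVW using hsep
  -- finite subcover of A in the upper topology
  obtain ⟨t, ht⟩ := @IsCompact.elim_finite_subcover Y (upTop Y) A ↥A hcomp
    (fun x : A => V x x.2) (fun x => upTop_isOpen.2 ⟨hVo x x.2, hVu x x.2⟩)
    (fun x hx => Set.mem_iUnion.2 ⟨⟨x, hx⟩, hV x hx⟩)
  refine ⟨⋂ x ∈ t, W x x.2, ?_, ?_, ?_⟩
  · intro z hz (hzA : z ∈ A)
    obtain ⟨x, hxt, hxV⟩ := Set.mem_iUnion₂.1 (ht hzA)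
    exact (Set.disjoint_right.1 (hVW x x.2)) (Set.mem_iInter₂.1 hz x hxt) hxV
  · exact isOpen_biInter_finset fun x _ => hWo x x.2
  · exact Set.mem_iInter₂.2 fun x _ => hW x x.2

/-- a closed upper set is compact saturated in the upper topology -/
lemma closed_upper_compSatUp {A : Set Y} (hA : IsClosed A) (hAu : IsUpperSet A) :
    CompSatUp A := by
  constructor
  · -- compact for the coarser upper topology
    refine @isCompact_of_finite_subcover Y (upTop Y) A ?_
    intro ι Uf hUf hcov
    exact hA.isCompact.elim_finite_subcover Uf
      (fun i => (upTop_isOpen.1 (hUf i)).1) hcov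
  · refine ⟨{W | (IsOpen W ∧ IsUpperSet W) ∧ A ⊆ W}, fun W hW => hW.1, ?_⟩
    apply Set.Subset.antisymm
    · exact fun a ha => Set.mem_sInter.2 fun W hW => hW.2 ha
    · intro y hy
      by_contra hyA
      have hdisj : Disjoint A (Set.Iic y) := by
        rw [Set.disjoint_left]
        exact fun z hz hz' => hyA (hAu hz' hz)
      obtain ⟨Vs, Ws, hVo, hVu, hWo, hWl, hV, hW, hVW⟩ :=
        mySep hA hAu (myIic_closed y) (isLowerSet_Iic y) hdisj
      have : y ∈ Vs := Set.mem_sInter.1 hy Vs ⟨⟨hVo, hVu⟩, hV⟩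
      exact (Set.disjoint_left.1 hVW) this (hW le_rfl)

/-- interpolation: between a closed upper set and an open upper set containing it
there are an open upper set and a closed upper set -/
lemma myInterp {A V : Set Y} (hA : IsClosed A) (hAu : IsUpperSet A)
    (hV : IsOpen V) (hVu : IsUpperSet V) (h : A ⊆ V) :
    ∃ V' L : Set Y, IsOpen V' ∧ IsUpperSet V' ∧ IsClosed L ∧ IsUpperSet L ∧
      A ⊆ V' ∧ V' ⊆ L ∧ L ⊆ V := by
  have hdisj : Disjoint A Vᶜ := Set.disjoint_compl_right_iff_subset.2 h
  obtain ⟨V', W', hV'o, hV'u, hW'o, hW'l, hAV', hVW', hd⟩ :=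
    mySep hA hAu hV.isClosed_compl hVu.compl hdisj
  refine ⟨V', W'ᶜ, hV'o, hV'u, hW'o.isClosed_compl, hW'l.compl, hAV', ?_, ?_⟩
  · exact fun z hz => Set.disjoint_left.1 hd hz
  · intro z hz
    by_contra hzV
    exact hz (hVW' hzV)

end Main

/-- The weak Hausdorff property of compact ordered spaces: if `K_1 ∩ ⋯ ∩ K_n ⊆ U`
with the `K_i` compact saturated in `Y^↑` and `U` open in `Y^↑`, then there are compact
saturated `L_i` with `K_i ≺ L_i` and `L_1 ∩ ⋯ ∩ L_n ⊆ U`. -/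
theorem stmt2 {Y : Type*} [TopologicalSpace Y] [CompactSpace Y] [T2Space Y]
    [PartialOrder Y] [OrderClosedTopology Y]
    (n : ℕ) (K : Fin n → Set Y) (hK : ∀ i, CompSatUp (K i))
    (U : Set Y) (hUopen : IsOpen U) (hUup : IsUpperSet U)
    (hsub : (⋂ i, K i) ⊆ U) :
    ∃ L : Fin n → Set Y,
      (∀ i, CompSatUp (L i) ∧ WayBelow (K i) (L i)) ∧ (⋂ i, L i) ⊆ U := by
  classical
  have hKc : ∀ i, IsClosed (K i) ∧ IsUpperSet (K i) :=
    fun i => compSatUp_closed_upper (hK i)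
  set C := Uᶜ with hC
  have hCc : IsClosed C := hUopen.isClosed_compl
  have hCcomp : IsCompact C := hCc.isCompact
  -- for every point of C choose an index and a separating pair
  have key : ∀ y ∈ C, ∃ (i : Fin n) (V W : Set Y), IsOpen V ∧ IsUpperSet V ∧
      IsOpen W ∧ IsLowerSet W ∧ K i ⊆ V ∧ y ∈ W ∧ Disjoint V W := by
    intro y hy
    have : ∃ i, y ∉ K i := by
      by_contra h
      push_neg at h
      exact hy (hsub (Set.mem_iInter.2 h))
    obtain ⟨i, hyi⟩ := this
    have hdisj : Disjoint (K i) (Set.Iic y) := by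
      rw [Set.disjoint_left]
      exact fun z hz hz' => hyi ((hKc i).2 hz' hz)
    obtain ⟨V, W, hVo, hVu, hWo, hWl, hV, hW, hVW⟩ :=
      mySep (hKc i).1 (hKc i).2 (myIic_closed y) (isLowerSet_Iic y) hdisj
    exact ⟨i, V, W, hVo, hVu, hWo, hWl, hV, hW le_rfl, hVW⟩
  choose idx Vf Wf hVo hVu hWo hWl hKV hyW hVW using key
  -- finite subcover of C by the W's
  obtain ⟨t, ht⟩ := hCcomp.elim_nhds_subcover' (fun y hy => Wf y hy)
    (fun y hy => (hWo y hy).mem_nhds (hyW y hy))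
  -- the open upper set around K i
  set Vi : Fin n → Set Y := fun i =>
    ⋂ y ∈ t, (if idx y.1 y.2 = i then Vf y.1 y.2 else Set.univ)
  have hVio : ∀ i, IsOpen (Vi i) := fun i =>
    isOpen_biInter_finset fun y _ => by
      by_cases h : idx y.1 y.2 = i
      · rw [if_pos h]; exact hVo y.1 y.2
      · rw [if_neg h]; exact isOpen_univ
  have hViu : ∀ i, IsUpperSet (Vi i) := fun i =>
    isUpperSet_iInter₂ fun y _ => by
      by_cases h : idx y.1 y.2 = i
      · rw [if_pos h]; exact hVu y.1 y.2
      · rw [if_neg h]; exact isUpperSet_univ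
  have hKVi : ∀ i, K i ⊆ Vi i := fun i => Set.subset_iInter₂ fun y _ => by
    by_cases h : idx y.1 y.2 = i
    · rw [if_pos h]; exact h ▸ hKV y.1 y.2
    · rw [if_neg h]; exact Set.subset_univ _
  have hVisub : ∀ y ∈ t, Vi (idx y.1 y.2) ⊆ Vf y.1 y.2 := by
    intro y hy
    refine (Set.biInter_subset_of_mem hy).trans ?_
    rw [if_pos rfl]
  -- interpolate
  have hint : ∀ i, ∃ V' L : Set Y, IsOpen V' ∧ IsUpperSet V' ∧ IsClosed L ∧
      IsUpperSet L ∧ K i ⊆ V' ∧ V' ⊆ L ∧ L ⊆ Vi i := fun i =>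
    myInterp (hKc i).1 (hKc i).2 (hVio i) (hViu i) (hKVi i)
  choose V' L hV'o hV'u hLc hLu hKV' hV'L hLV using hint
  refine ⟨L, fun i => ⟨closed_upper_compSatUp (hLc i) (hLu i),
    V' i, hV'o i, hV'u i, hKV' i, hV'L i⟩, ?_⟩
  intro z hz
  by_contra hzU
  obtain ⟨y, hyt, hzW⟩ := Set.mem_iUnion₂.1 (ht hzU)
  have hzV : z ∈ Vf y.1 y.2 :=
    hVisub y hyt (hLV (idx y.1 y.2) (Set.mem_iInter.1 hz _))
  exact (Set.disjoint_left.1 (hVW y.1 y.2)) hzV hzW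
end

section
/- Let (Y, π, ≤) be a compact ordered space and K a compact saturated subset of Y^↑. Then the collection ↟K = {K' ⊆ Y : K' is compact saturated in Y^↑ and K ≺ K'} is closed under binary intersections (if K_1, K_2 ∈ ↟K then K_1 ∩ K_2 is compact saturated and K ≺ K_1 ∩ K_2), and K = ⋂ ↟K. -/
section AuxStmt3

variable {Y : Type*} [TopologicalSpace Y] [CompactSpace Y] [T2Space Y]
  [PartialOrder Y] [OrderClosedTopology Y]

/-- The lower closure of a closed set is closed in a compact pospace. -/
lemma stmt3_lowerClosed {C : Set Y} (hC : IsClosed C) :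
    IsClosed {x : Y | ∃ c ∈ C, x ≤ c} := by
  have h1 : IsClosed {p : Y × Y | p.1 ≤ p.2} := isClosed_le continuous_fst continuous_snd
  have h2 : IsCompact ({p : Y × Y | p.1 ≤ p.2} ∩ (Set.univ ×ˢ C)) :=
    (h1.inter (isClosed_univ.prod hC)).isCompact
  have h3 : IsCompact (Prod.fst '' ({p : Y × Y | p.1 ≤ p.2} ∩ (Set.univ ×ˢ C))) :=
    h2.image continuous_fst
  have he : {x : Y | ∃ c ∈ C, x ≤ c}
      = Prod.fst '' ({p : Y × Y | p.1 ≤ p.2} ∩ (Set.univ ×ˢ C)) := by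
    ext x
    constructor
    · rintro ⟨c, hc, hxc⟩; exact ⟨(x, c), ⟨hxc, ⟨trivial, hc⟩⟩, rfl⟩
    · rintro ⟨⟨a, b⟩, ⟨hab, ⟨-, hb⟩⟩, rfl⟩; exact ⟨b, hb, hab⟩
  rw [he]
  exact h3.isClosed

/-- The upper closure of a closed set is closed in a compact pospace. -/
lemma stmt3_upperClosed {C : Set Y} (hC : IsClosed C) :
    IsClosed {x : Y | ∃ c ∈ C, c ≤ x} := by
  have h1 : IsClosed {p : Y × Y | p.2 ≤ p.1} := isClosed_le continuous_snd continuous_fst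
  have h2 : IsCompact ({p : Y × Y | p.2 ≤ p.1} ∩ (Set.univ ×ˢ C)) :=
    (h1.inter (isClosed_univ.prod hC)).isCompact
  have h3 : IsCompact (Prod.fst '' ({p : Y × Y | p.2 ≤ p.1} ∩ (Set.univ ×ˢ C))) :=
    h2.image continuous_fst
  have he : {x : Y | ∃ c ∈ C, c ≤ x}
      = Prod.fst '' ({p : Y × Y | p.2 ≤ p.1} ∩ (Set.univ ×ˢ C)) := by
    ext x
    constructor
    · rintro ⟨c, hc, hxc⟩; exact ⟨(x, c), ⟨hxc, ⟨trivial, hc⟩⟩, rfl⟩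
    · rintro ⟨⟨a, b⟩, ⟨hab, ⟨-, hb⟩⟩, rfl⟩; exact ⟨b, hb, hab⟩
  rw [he]
  exact h3.isClosed

/-- Nachbin separation: a closed upper set and a point outside it can be separated
by a disjoint open upper set / open lower set pair. -/
lemma stmt3_sep {K : Set Y} (hKc : IsClosed K) (hKu : IsUpperSet K) {y : Y} (hy : y ∉ K) :
    ∃ U O : Set Y, IsOpen U ∧ IsUpperSet U ∧ IsOpen O ∧ IsLowerSet O ∧
      K ⊆ U ∧ y ∈ O ∧ U ∩ O = ∅ := by
  have hdisj : Disjoint K (Set.Iic y) := by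
    rw [Set.disjoint_left]
    rintro z hz (hzy : z ≤ y)
    exact hy (hKu hzy hz)
  obtain ⟨V, O₀, hVo, hO₀o, hKV, hIicO₀, hVO₀⟩ :=
    NormalSpace.normal K (Set.Iic y) hKc isClosed_Iic hdisj
  refine ⟨{x : Y | ∃ c ∈ Vᶜ, x ≤ c}ᶜ, {x : Y | ∃ c ∈ O₀ᶜ, c ≤ x}ᶜ,
    (stmt3_lowerClosed hVo.isClosed_compl).isOpen_compl, ?_,
    (stmt3_upperClosed hO₀o.isClosed_compl).isOpen_compl, ?_, ?_, ?_, ?_⟩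
  · refine IsLowerSet.compl ?_
    rintro a b hba ⟨c, hc, hac⟩
    exact ⟨c, hc, hba.trans hac⟩
  · refine IsUpperSet.compl ?_
    rintro a b hab ⟨c, hc, hca⟩
    exact ⟨c, hc, hca.trans hab⟩
  · intro x hx
    rintro ⟨c, hc, hxc⟩
    exact hc (hKV (hKu hxc hx))
  · rintro ⟨c, hc, hcy⟩
    exact hc (hIicO₀ hcy)
  · ext z
    simp only [Set.mem_inter_iff, Set.mem_compl_iff, Set.mem_setOf_eq, Set.mem_empty_iff_false,
      iff_false, not_and]
    intro hzU hzO
    have hzV : z ∈ V := by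
      by_contra hzV
      exact hzU ⟨z, hzV, le_refl z⟩
    have hzO₀ : z ∈ O₀ := by
      by_contra hzO₀
      exact hzO ⟨z, hzO₀, le_refl z⟩
    exact (Set.disjoint_left.1 hVO₀) hzV hzO₀

/-- A closed upper set is compact saturated in the upper topology. -/
lemma stmt3_closedUpper_compSatUp {K : Set Y} (hKc : IsClosed K) (hKu : IsUpperSet K) :
    CompSatUp K := by
  constructor
  · have hcomp : IsCompact K := hKc.isCompact
    have hle : ‹TopologicalSpace Y› ≤ upTop Y := by
      rw [TopologicalSpace.le_def]; exact fun U hU => hU.1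
    have hc : @Continuous Y Y _ (upTop Y) id := continuous_id_of_le hle
    have := @IsCompact.image Y Y _ (upTop Y) K id hcomp hc
    rwa [Set.image_id] at this
  · refine ⟨{U : Set Y | IsOpen U ∧ IsUpperSet U ∧ K ⊆ U}, fun U hU => ⟨hU.1, hU.2.1⟩, ?_⟩
    apply Set.Subset.antisymm
    · exact fun x hx => Set.mem_sInter.2 fun U hU => hU.2.2 hx
    · intro y hy
      by_contra hyK
      obtain ⟨U, O, hUo, hUu, -, -, hKU, hyO, hUO⟩ := stmt3_sep hKc hKu hyK
      have hyU : y ∈ U := Set.mem_sInter.1 hy U ⟨hUo, hUu, hKU⟩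
      have : y ∈ U ∩ O := ⟨hyU, hyO⟩
      rw [hUO] at this
      exact this

/-- A compact saturated set in the upper topology is a closed upper set. -/
lemma stmt3_compSatUp_closedUpper {K : Set Y} (hK : CompSatUp K) :
    IsClosed K ∧ IsUpperSet K := by
  obtain ⟨hKcomp, 𝒰, h𝒰, hKeq⟩ := hK
  have hKu : IsUpperSet K := by
    rw [hKeq]
    intro a b hab ha
    exact Set.mem_sInter.2 fun U hU => (h𝒰 U hU).2 hab (Set.mem_sInter.1 ha U hU)
  refine ⟨?_, hKu⟩
  rw [← isOpen_compl_iff]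
  rw [isOpen_iff_mem_nhds]
  intro y hy
  have hy : y ∉ K := hy
  -- for each x ∈ K, choose a π-open upper set Uₓ ∋ x and a π-open Oₓ ∋ y disjoint from it
  have hsep : ∀ x : K, ∃ U O : Set Y, IsOpen U ∧ IsUpperSet U ∧ IsOpen O ∧
      (x : Y) ∈ U ∧ y ∈ O ∧ U ∩ O = ∅ := by
    rintro ⟨x, hx⟩
    have hxy : ¬ x ≤ y := fun h => hy (hKu h hx)
    have hdisj : Disjoint (Set.Ici x) (Set.Iic y) := by
      rw [Set.disjoint_left]
      rintro z (hz : x ≤ z) (hzy : z ≤ y)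
      exact hxy (hz.trans hzy)
    obtain ⟨V, O, hVo, hOo, hIciV, hIicO, hVO⟩ :=
      NormalSpace.normal (Set.Ici x) (Set.Iic y) isClosed_Ici isClosed_Iic hdisj
    refine ⟨{w : Y | ∃ c ∈ Vᶜ, w ≤ c}ᶜ, O,
      (stmt3_lowerClosed hVo.isClosed_compl).isOpen_compl, ?_, hOo, ?_, hIicO le_rfl, ?_⟩
    · refine IsLowerSet.compl ?_
      rintro a b hba ⟨c, hc, hac⟩
      exact ⟨c, hc, hba.trans hac⟩
    · rintro ⟨c, hc, hxc⟩
      exact hc (hIciV hxc)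
    · ext z
      simp only [Set.mem_inter_iff, Set.mem_compl_iff, Set.mem_setOf_eq,
        Set.mem_empty_iff_false, iff_false, not_and]
      intro hzU hzO
      have hzV : z ∈ V := by
        by_contra hzV
        exact hzU ⟨z, hzV, le_refl z⟩
      exact (Set.disjoint_left.1 hVO) hzV hzO
  choose U O hUo hUu hOo hxU hyO hUO using hsep
  have hcover : K ⊆ ⋃ x : K, U x := fun x hx =>
    Set.mem_iUnion.2 ⟨⟨x, hx⟩, hxU ⟨x, hx⟩⟩
  have hUopen : ∀ x : K, @IsOpen Y (upTop Y) (U x) := fun x => ⟨hUo x, hUu x⟩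
  obtain ⟨t, ht⟩ := @IsCompact.elim_finite_subcover Y (upTop Y) K _ hKcomp U hUopen hcover
  refine Filter.mem_of_superset ?_ (show (⋂ x ∈ t, O x) ⊆ Kᶜ from ?_)
  · exact (isOpen_biInter_finset fun x _ => hOo x).mem_nhds
      (Set.mem_iInter₂.2 fun x _ => hyO x)
  · intro z hz hzK
    obtain ⟨x, hxt, hzU⟩ := Set.mem_iUnion₂.1 (ht hzK)
    have hzO : z ∈ O x := Set.mem_iInter₂.1 hz x hxt
    have : z ∈ U x ∩ O x := ⟨hzU, hzO⟩
    rw [hUO x] at this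
    exact this

end AuxStmt3

/-- For a compact saturated `K` in `Y^↑` over a compact ordered space, the collection
`↟K = {K' : K' compact saturated, K ≺ K'}` is closed under binary intersections
(and `K ≺ K₁ ∩ K₂` for members `K₁, K₂`), and `K = ⋂ ↟K`. -/
theorem stmt3 {Y : Type*} [TopologicalSpace Y] [CompactSpace Y] [T2Space Y]
    [PartialOrder Y] [OrderClosedTopology Y]
    (K : Set Y) (hK : CompSatUp K) :
    (∀ K₁ K₂ : Set Y, CompSatUp K₁ → WayBelow K K₁ → CompSatUp K₂ → WayBelow K K₂ →
        CompSatUp (K₁ ∩ K₂) ∧ WayBelow K (K₁ ∩ K₂)) ∧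
    K = ⋂₀ {K' : Set Y | CompSatUp K' ∧ WayBelow K K'} := by
  obtain ⟨hKc, hKu⟩ := stmt3_compSatUp_closedUpper hK
  constructor
  · rintro K₁ K₂ hK₁ ⟨U₁, hU₁o, hU₁u, hKU₁, hU₁K₁⟩ hK₂ ⟨U₂, hU₂o, hU₂u, hKU₂, hU₂K₂⟩
    obtain ⟨hK₁c, hK₁u⟩ := stmt3_compSatUp_closedUpper hK₁
    obtain ⟨hK₂c, hK₂u⟩ := stmt3_compSatUp_closedUpper hK₂
    exact ⟨stmt3_closedUpper_compSatUp (hK₁c.inter hK₂c) (hK₁u.inter hK₂u),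
      U₁ ∩ U₂, hU₁o.inter hU₂o, hU₁u.inter hU₂u, Set.subset_inter hKU₁ hKU₂,
      Set.inter_subset_inter hU₁K₁ hU₂K₂⟩
  · apply Set.Subset.antisymm
    · intro x hx
      refine Set.mem_sInter.2 ?_
      rintro K' ⟨-, U, -, -, hKU, hUK'⟩
      exact hUK' (hKU hx)
    · intro y hy
      by_contra hyK
      obtain ⟨U, O, hUo, hUu, hOo, hOl, hKU, hyO, hUO⟩ := stmt3_sep hKc hKu hyK
      have hK' : CompSatUp Oᶜ :=
        stmt3_closedUpper_compSatUp hOo.isClosed_compl hOl.compl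
      have hwb : WayBelow K Oᶜ :=
        ⟨U, hUo, hUu, hKU, fun z hz hzO => by
          have h : z ∈ U ∩ O := ⟨hz, hzO⟩
          rw [hUO] at h
          exact h⟩
      exact (Set.mem_sInter.1 hy Oᶜ ⟨hK', hwb⟩) hyO
end

section
/- (Hofmann–Mislove) Let Y be a sober topological space. For a compact saturated set K ⊆ Y put 𝓕_K = {U ⊆ Y : U open and K ⊆ U}. Then: (i) for compact saturated K, L one has K ⊆ L iff 𝓕_L ⊆ 𝓕_K, so the assignment K ↦ 𝓕_K is injective; (ii) a filter 𝓕 of open sets (a collection of open sets containing Y, closed under binary intersections, and such that V ∈ 𝓕 whenever U ∈ 𝓕, U ⊆ V and V is open) is of the form 𝓕_K for some compact saturated K if and only if 𝓕 is Scott-open, meaning: whenever (U_i)_{i∈I} is a ⊆-directed family of open sets with ⋃_{i∈I} U_i ∈ 𝓕, then U_i ∈ 𝓕 for some i; (iii) in that case K = ⋂ 𝓕 is the unique compact saturated set with 𝓕_K = 𝓕. -/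
/-- The collection of open sets containing a given set `K`. -/
def openNbhds {Y : Type*} [TopologicalSpace Y] (K : Set Y) : Set (Set Y) :=
  {U : Set Y | IsOpen U ∧ K ⊆ U}

/-- A *filter of open sets*: a collection of open sets containing the whole space,
closed under binary intersections, and upward closed among open sets. -/
def OpenFilter {Y : Type*} [TopologicalSpace Y] (𝓕 : Set (Set Y)) : Prop :=
  Set.univ ∈ 𝓕 ∧ (∀ U ∈ 𝓕, IsOpen U) ∧ (∀ U ∈ 𝓕, ∀ V ∈ 𝓕, U ∩ V ∈ 𝓕) ∧
    (∀ U ∈ 𝓕, ∀ V : Set Y, IsOpen V → U ⊆ V → V ∈ 𝓕)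

/-- A collection of open sets is *Scott-open* if whenever a (nonempty) `⊆`-directed
family of open sets has its union in the collection, some member of the family
already belongs to the collection. -/
def ScottOpen {Y : Type*} [TopologicalSpace Y] (𝓕 : Set (Set Y)) : Prop :=
  ∀ D : Set (Set Y), D.Nonempty → (∀ U ∈ D, IsOpen U) → DirectedOn (· ⊆ ·) D →
    ⋃₀ D ∈ 𝓕 → ∃ U ∈ D, U ∈ 𝓕

/-- A saturated set equals the intersection of its open neighborhoods. -/
lemma sat_eq {Y : Type*} [TopologicalSpace Y] {K : Set Y} (hK : Saturated K) :
    K = ⋂₀ openNbhds K := by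
  obtain ⟨𝒰, h𝒰o, rfl⟩ := hK
  apply Set.Subset.antisymm
  · exact fun x hx U hU => hU.2 hx
  · intro x hx U hU
    exact hx U ⟨h𝒰o U hU, Set.sInter_subset_of_mem hU⟩

/-- Key Hofmann–Mislove lemma: for a Scott-open open filter on a sober space,
every open set containing `⋂₀ 𝓕` belongs to `𝓕`. -/
lemma key {Y : Type*} [TopologicalSpace Y] [QuasiSober Y] {𝓕 : Set (Set Y)}
    (hF : OpenFilter 𝓕) (hS : ScottOpen 𝓕) {U : Set Y} (hU : IsOpen U)
    (hKU : ⋂₀ 𝓕 ⊆ U) : U ∈ 𝓕 := by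
  obtain ⟨huniv, hopen, hinter, hup⟩ := hF
  by_contra hUF
  -- Zorn: maximal open V ⊇ U with V ∉ 𝓕
  obtain ⟨V, hUV, hVmax⟩ := zorn_subset_nonempty
      {V : Set Y | IsOpen V ∧ U ⊆ V ∧ V ∉ 𝓕} (fun c hcS hchain hcne => by
        refine ⟨⋃₀ c, ⟨isOpen_sUnion fun W hW => (hcS hW).1,
          le_trans (hcS hcne.choose_spec).2.1 (Set.subset_sUnion_of_mem hcne.choose_spec), ?_⟩,
          fun s hs => Set.subset_sUnion_of_mem hs⟩
        intro hcU
        obtain ⟨W, hWc, hWF⟩ := hS c hcne (fun W hW => (hcS hW).1) hchain.directedOn hcU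
        exact (hcS hWc).2.2 hWF)
      U ⟨hU, le_refl U, hUF⟩
  obtain ⟨hVopen, hUV', hVF⟩ := hVmax.prop
  -- Vᶜ is irreducible closed
  have hVne : Vᶜ.Nonempty := by
    rw [Set.nonempty_compl]
    rintro rfl
    exact hVF huniv
  have hirr : IsIrreducible Vᶜ := by
    refine ⟨hVne, fun u v huo hvo hu hv => ?_⟩
    have step : ∀ w : Set Y, IsOpen w → (Vᶜ ∩ w).Nonempty → V ∪ w ∈ 𝓕 := by
      intro w hwo ⟨x, hxV, hxw⟩
      by_contra hVw
      have := hVmax.eq_of_subset ⟨hVopen.union hwo, hUV'.trans Set.subset_union_left, hVw⟩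
          Set.subset_union_left
      exact hxV (this ▸ Set.mem_union_right V hxw : x ∈ V)
    have h1 := step u huo hu
    have h2 := step v hvo hv
    have h3 : V ∪ (u ∩ v) ∈ 𝓕 := by
      have := hinter _ h1 _ h2
      rwa [← Set.union_inter_distrib_left] at this
    by_contra hempty
    rw [Set.not_nonempty_iff_eq_empty] at hempty
    have huv : u ∩ v ⊆ V := by
      intro x hx
      by_contra hxV
      exact Set.eq_empty_iff_forall_notMem.mp hempty x ⟨hxV, hx⟩
    rw [Set.union_eq_self_of_subset_right huv] at h3
    exact hVF h3
  obtain ⟨y, hy⟩ := QuasiSober.sober hirr hVopen.isClosed_compl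
  -- y ∈ ⋂₀ 𝓕 but y ∉ U
  have hyK : y ∈ ⋂₀ 𝓕 := by
    intro W hW
    have hWV : ¬ W ⊆ V := fun h => hVF (hup W hW V hVopen h)
    obtain ⟨x, hxW, hxV⟩ := Set.not_subset.mp hWV
    have hxc : x ∈ closure ({y} : Set Y) := hy ▸ hxV
    obtain ⟨z, hzW, hzy⟩ := mem_closure_iff.mp hxc W (hopen W hW) hxW
    rwa [Set.mem_singleton_iff.mp hzy] at hzW
  have hyV : y ∉ V := by
    have : y ∈ closure ({y} : Set Y) := subset_closure rfl
    exact (hy ▸ this : y ∈ Vᶜ)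
  exact hyV (hUV' (hKU hyK))

/-- For a compact set, `openNbhds K` is Scott-open. -/
lemma scottOpen_of_compact {Y : Type*} [TopologicalSpace Y] {K : Set Y}
    (hK : IsCompact K) : ScottOpen (openNbhds K) := by
  intro D hDne hDo hDdir hDU
  haveI : Nonempty D := hDne.to_subtype
  have hdir : Directed (· ⊆ ·) (fun U : D => (U : Set Y)) := by
    rintro ⟨u, hu⟩ ⟨v, hv⟩
    obtain ⟨w, hw, huw, hvw⟩ := hDdir u hu v hv
    exact ⟨⟨w, hw⟩, huw, hvw⟩
  have hcov : K ⊆ ⋃ U : D, (U : Set Y) := by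
    rw [← Set.sUnion_eq_iUnion]; exact hDU.2
  obtain ⟨⟨U, hUD⟩, hKU⟩ := hK.elim_directed_cover (fun U : D => (U : Set Y))
    (fun U => hDo U U.2) hcov hdir
  exact ⟨U, hUD, hDo U hUD, hKU⟩

/-- The core of Hofmann–Mislove: a Scott-open open filter on a sober space is the
open-neighborhood filter of its (compact) intersection. -/
lemma core {Y : Type*} [TopologicalSpace Y] [QuasiSober Y] {𝓕 : Set (Set Y)}
    (hF : OpenFilter 𝓕) (hS : ScottOpen 𝓕) :
    IsCompact (⋂₀ 𝓕) ∧ openNbhds (⋂₀ 𝓕) = 𝓕 := by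
  have heq : openNbhds (⋂₀ 𝓕) = 𝓕 := by
    apply Set.Subset.antisymm
    · intro U hU
      exact key hF hS hU.1 hU.2
    · intro U hU
      exact ⟨hF.2.1 U hU, Set.sInter_subset_of_mem hU⟩
  refine ⟨?_, heq⟩
  apply isCompact_of_finite_subcover
  intro ι U hUo hcov
  set D : Set (Set Y) := {V | ∃ t : Finset ι, V = ⋃ i ∈ t, U i} with hD
  have hDne : D.Nonempty := ⟨⋃ i ∈ (∅ : Finset ι), U i, ∅, rfl⟩
  have hDo : ∀ V ∈ D, IsOpen V := by
    rintro V ⟨t, rfl⟩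
    exact isOpen_biUnion fun i _ => hUo i
  classical
  have hDdir : DirectedOn (· ⊆ ·) D := by
    rintro V ⟨t, rfl⟩ W ⟨u, rfl⟩
    refine ⟨⋃ i ∈ t ∪ u, U i, ⟨t ∪ u, rfl⟩, ?_, ?_⟩
    · exact Set.biUnion_subset_biUnion_left (fun i hi => Finset.mem_union_left _ hi)
    · exact Set.biUnion_subset_biUnion_left (fun i hi => Finset.mem_union_right _ hi)
  have hDU : ⋃₀ D = ⋃ i, U i := by
    apply Set.Subset.antisymm
    · rintro x ⟨V, ⟨t, rfl⟩, hx⟩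
      obtain ⟨i, _, hi⟩ := Set.mem_iUnion₂.mp hx
      exact Set.mem_iUnion.mpr ⟨i, hi⟩
    · intro x hx
      obtain ⟨i, hi⟩ := Set.mem_iUnion.mp hx
      exact ⟨⋃ j ∈ ({i} : Finset ι), U j, ⟨{i}, rfl⟩, by simpa using hi⟩
  have hmem : ⋃₀ D ∈ 𝓕 := by
    rw [hDU]; exact key hF hS (isOpen_iUnion hUo) hcov
  obtain ⟨V, ⟨t, rfl⟩, hVF⟩ := hS D hDne hDo hDdir hmem
  rw [← heq] at hVF
  exact ⟨t, hVF.2⟩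

/-- The Hofmann–Mislove theorem for a sober space `Y`:
(i) for compact saturated `K, L` one has `K ⊆ L` iff `𝓕_L ⊆ 𝓕_K` (so `K ↦ 𝓕_K` is
injective); (ii) a filter of open sets is of the form `𝓕_K` with `K` compact saturated
iff it is Scott-open; (iii) in that case `K = ⋂ 𝓕` is the unique such compact saturated set. -/
theorem stmt4 {Y : Type*} [TopologicalSpace Y] [T0Space Y] [QuasiSober Y] :
    (∀ K L : Set Y, IsCompact K → Saturated K → IsCompact L → Saturated L →
        (K ⊆ L ↔ openNbhds L ⊆ openNbhds K)) ∧
    (∀ 𝓕 : Set (Set Y), OpenFilter 𝓕 →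
        ((∃ K : Set Y, IsCompact K ∧ Saturated K ∧ 𝓕 = openNbhds K) ↔ ScottOpen 𝓕)) ∧
    (∀ 𝓕 : Set (Set Y), OpenFilter 𝓕 → ScottOpen 𝓕 →
        IsCompact (⋂₀ 𝓕) ∧ Saturated (⋂₀ 𝓕) ∧ openNbhds (⋂₀ 𝓕) = 𝓕 ∧
          ∀ K : Set Y, IsCompact K → Saturated K → openNbhds K = 𝓕 → K = ⋂₀ 𝓕) := by
  refine ⟨?_, ?_, ?_⟩
  · intro K L _ hKs _ hLs
    constructor
    · intro hKL U hU
      exact ⟨hU.1, hKL.trans hU.2⟩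
    · intro hsub
      calc K ⊆ ⋂₀ openNbhds L := fun x hx U hU => (hsub hU).2 hx
        _ = L := (sat_eq hLs).symm
  · intro 𝓕 hF
    constructor
    · rintro ⟨K, hKc, _, rfl⟩
      exact scottOpen_of_compact hKc
    · intro hS
      obtain ⟨hc, heq⟩ := core hF hS
      exact ⟨⋂₀ 𝓕, hc, ⟨𝓕, hF.2.1, rfl⟩, heq.symm⟩
  · intro 𝓕 hF hS
    obtain ⟨hc, heq⟩ := core hF hS
    refine ⟨hc, ⟨𝓕, hF.2.1, rfl⟩, heq, ?_⟩
    intro K _ hKs hKF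
    rw [sat_eq hKs, hKF]
end

section
/- Let Y be a locally compact topological space (every point has a neighborhood basis of compact sets), p : E → Y a local homeomorphism, and U ⊆ Y open. Suppose that for each compact saturated K ⊆ U a section s_K of p over K is given, and that these are compatible: whenever L ⊆ K are compact saturated subsets of U, the restriction of s_K to L equals s_L. Then there exists a unique section s of p over U such that the restriction of s to K equals s_K for every compact saturated K ⊆ U. -/
/-- The saturation of a set: intersection of all open sets containing it. -/
def satOf {Y : Type*} [TopologicalSpace Y] (S : Set Y) : Set Y :=
  ⋂₀ {V | IsOpen V ∧ S ⊆ V}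

lemma subset_satOf {Y : Type*} [TopologicalSpace Y] (S : Set Y) : S ⊆ satOf S :=
  fun _ hx => Set.mem_sInter.2 fun _ hV => hV.2 hx

lemma satOf_subset {Y : Type*} [TopologicalSpace Y] {S V : Set Y} (hV : IsOpen V)
    (h : S ⊆ V) : satOf S ⊆ V :=
  Set.sInter_subset_of_mem ⟨hV, h⟩

lemma saturated_satOf {Y : Type*} [TopologicalSpace Y] (S : Set Y) : Saturated (satOf S) :=
  ⟨{V | IsOpen V ∧ S ⊆ V}, fun _ hV => hV.1, rfl⟩

lemma isCompact_satOf {Y : Type*} [TopologicalSpace Y] {S : Set Y} (hS : IsCompact S) :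
    IsCompact (satOf S) := by
  refine isCompact_of_finite_subcover fun Us hUs hcov => ?_
  obtain ⟨t, ht⟩ := hS.elim_finite_subcover Us hUs ((subset_satOf S).trans hcov)
  exact ⟨t, satOf_subset (isOpen_iUnion fun i => isOpen_iUnion fun _ => hUs i) ht⟩

lemma satOf_singleton_subset {Y : Type*} [TopologicalSpace Y] {K : Set Y}
    (hK : Saturated K) {y : Y} (hy : y ∈ K) : satOf {y} ⊆ K := by
  obtain ⟨𝒰, h1, rfl⟩ := hK
  exact fun x hx => Set.mem_sInter.2 fun W hW =>
    satOf_subset (h1 W hW) (Set.singleton_subset_iff.2 (Set.mem_sInter.1 hy W hW)) hx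

/-- Sections of a local homeomorphism over an open set of a locally compact space
form the inverse limit of the sections over the compact saturated subsets:
any compatible family of sections over the compact saturated subsets of an open set `U`
is the family of restrictions of a unique section over `U`.
A section over `S ⊆ Y` is represented by a function `Y → E` which is continuous on `S`
(i.e. its restriction to `S` with the subspace topology is continuous) and is a
pointwise section of `p` on `S`; only its values on `S` are relevant. -/
theorem stmt5 {Y E : Type*} [TopologicalSpace Y] [LocallyCompactSpace Y]
    [TopologicalSpace E] (p : E → Y) (hp : IsLocalHomeomorph p)
    (U : Set Y) (hU : IsOpen U)
    (σ : Set Y → Y → E)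
    (hσ : ∀ K : Set Y, IsCompact K → Saturated K → K ⊆ U →
      ContinuousOn (σ K) K ∧ ∀ y ∈ K, p (σ K y) = y)
    (hcompat : ∀ K L : Set Y, IsCompact K → Saturated K → K ⊆ U →
      IsCompact L → Saturated L → L ⊆ K → Set.EqOn (σ K) (σ L) L) :
    ∃ s : Y → E,
      (ContinuousOn s U ∧ (∀ y ∈ U, p (s y) = y) ∧
        ∀ K : Set Y, IsCompact K → Saturated K → K ⊆ U → Set.EqOn s (σ K) K) ∧
      ∀ t : Y → E,
        (ContinuousOn t U ∧ (∀ y ∈ U, p (t y) = y) ∧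
          ∀ K : Set Y, IsCompact K → Saturated K → K ⊆ U → Set.EqOn t (σ K) K) →
        Set.EqOn t s U := by
  classical
  -- key facts about satOf {y} for y ∈ U
  have hsat : ∀ y ∈ U, IsCompact (satOf {y}) ∧ Saturated (satOf {y}) ∧ satOf {y} ⊆ U :=
    fun y hy => ⟨isCompact_satOf isCompact_singleton, saturated_satOf _,
      satOf_subset hU (Set.singleton_subset_iff.2 hy)⟩
  set s : Y → E := fun y => σ (satOf {y}) y with hs
  -- s agrees with σ K on any compact saturated K ⊆ U
  have hagree : ∀ K : Set Y, IsCompact K → Saturated K → K ⊆ U → Set.EqOn s (σ K) K := by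
    intro K hKc hKs hKU y hy
    have hyU := hKU hy
    have h1 := hsat y hyU
    have hsub : satOf {y} ⊆ K := satOf_singleton_subset hKs hy
    have := hcompat K (satOf {y}) hKc hKs hKU h1.1 h1.2.1 hsub
      (subset_satOf {y} rfl)
    exact this.symm
  refine ⟨s, ⟨?_, ?_, hagree⟩, ?_⟩
  · -- continuity on U
    intro y hy
    obtain ⟨N, hNmem, hNU, hNc⟩ := local_compact_nhds (hU.mem_nhds hy)
    set K := satOf N
    have hKc := isCompact_satOf hNc
    have hKs := saturated_satOf N
    have hKU : K ⊆ U := satOf_subset hU hNU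
    have hcont : ContinuousOn s K :=
      ((hσ K hKc hKs hKU).1).congr (hagree K hKc hKs hKU)
    have : ContinuousAt s y :=
      hcont.continuousAt (Filter.mem_of_superset hNmem (subset_satOf N))
    exact this.continuousWithinAt
  · -- pointwise section
    intro y hy
    have h1 := hsat y hy
    exact (hσ _ h1.1 h1.2.1 h1.2.2).2 y (subset_satOf {y} rfl)
  · -- uniqueness
    intro t ⟨_, _, ht3⟩ y hy
    have h1 := hsat y hy
    have := ht3 _ h1.1 h1.2.1 h1.2.2 (subset_satOf {y} rfl)
    simpa [hs] using this
end

section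
/- Let (Y, π, ≤) be a compact ordered space and p : E → Y^↑ a soft local homeomorphism. Let K_1 and K_2 be compact saturated subsets of Y^↑ and let s, t be global sections of p such that s(y) = t(y) for all y ∈ K_1 ∩ K_2. Then there exists a global section u of p with u(y) = s(y) for all y ∈ K_1 and u(y) = t(y) for all y ∈ K_2. -/
/-- `p : E → Y^↑` is *soft* if every section of `p` over a compact saturated subset of
`Y^↑` extends to a global section. Sections over `K` are represented by functions
`Y → E` which are (`π^↑`-)continuous on `K` and pointwise sections of `p` on `K`. -/
def Soft {Y E : Type*} [TopologicalSpace Y] [Preorder Y] [tE : TopologicalSpace E]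
    (p : E → Y) : Prop :=
  ∀ K : Set Y, CompSatUp K → ∀ s : Y → E,
    @ContinuousOn Y E (upTop Y) tE s K → (∀ y ∈ K, p (s y) = y) →
      ∃ t : Y → E, @Continuous Y E (upTop Y) tE t ∧ (∀ y, p (t y) = y) ∧ Set.EqOn t s K

lemma mySubcover {X : Type*} (tX : TopologicalSpace X) {s : Set X}
    (hs : @IsCompact X tX s) {ι : Type*} (U : ι → Set X)
    (hUo : ∀ i, @IsOpen X tX (U i)) (hsU : s ⊆ ⋃ i, U i) :
    ∃ t : Finset ι, s ⊆ ⋃ i ∈ t, U i := by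
  letI := tX
  exact hs.elim_finite_subcover U hUo hsU

section Aux

variable {Y : Type*} [TopologicalSpace Y] [CompactSpace Y] [T2Space Y]
  [PartialOrder Y] [OrderClosedTopology Y]

lemma myIsUpperSet_of_compSatUp {K : Set Y} (h : CompSatUp K) : IsUpperSet K := by
  obtain ⟨-, 𝒰, h𝒰, rfl⟩ := h
  exact isUpperSet_sInter fun U hU => (h𝒰 U hU).2

lemma myLowerClosure_isClosed {C : Set Y} (hC : IsClosed C) :
    IsClosed {a : Y | ∃ c ∈ C, a ≤ c} := by
  have h2 : IsCompact ({p : Y × Y | p.1 ≤ p.2} ∩ Set.univ ×ˢ C) :=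
    (isClosed_le_prod.inter (isClosed_univ.prod hC)).isCompact
  have h3 : {a : Y | ∃ c ∈ C, a ≤ c}
      = Prod.fst '' ({p : Y × Y | p.1 ≤ p.2} ∩ Set.univ ×ˢ C) := by
    ext a
    constructor
    · rintro ⟨c, hc, hac⟩; exact ⟨(a, c), ⟨hac, ⟨trivial, hc⟩⟩, rfl⟩
    · rintro ⟨⟨a', c⟩, ⟨hle, -, hc⟩, rfl⟩; exact ⟨c, hc, hle⟩
  rw [h3]
  exact (h2.image continuous_fst).isClosed

lemma myUpperClosure_isClosed {C : Set Y} (hC : IsClosed C) :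
    IsClosed {a : Y | ∃ c ∈ C, c ≤ a} := by
  have h2 : IsCompact ({p : Y × Y | p.1 ≤ p.2} ∩ C ×ˢ Set.univ) :=
    (isClosed_le_prod.inter (hC.prod isClosed_univ)).isCompact
  have h3 : {a : Y | ∃ c ∈ C, c ≤ a}
      = Prod.snd '' ({p : Y × Y | p.1 ≤ p.2} ∩ C ×ˢ Set.univ) := by
    ext a
    constructor
    · rintro ⟨c, hc, hac⟩; exact ⟨(c, a), ⟨hac, ⟨hc, trivial⟩⟩, rfl⟩
    · rintro ⟨⟨c, a'⟩, ⟨hle, hc, -⟩, rfl⟩; exact ⟨c, hc, hle⟩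
  rw [h3]
  exact (h2.image continuous_snd).isClosed

/-- Nachbin separation in a compact ordered space. -/
lemma myNachbin {a b : Y} (hab : ¬ a ≤ b) :
    ∃ U V : Set Y, IsOpen U ∧ IsUpperSet U ∧ IsOpen V ∧ IsLowerSet V ∧
      a ∈ U ∧ b ∈ V ∧ U ∩ V = ∅ := by
  have hdisj : Disjoint (Set.Ici a) (Set.Iic b) := by
    rw [Set.disjoint_left]
    intro z hz hz'
    exact hab (le_trans hz hz')
  obtain ⟨W, W', hWo, hW'o, hFW, hGW', hWW'⟩ :=
    NormalSpace.normal _ _ isClosed_Ici isClosed_Iic hdisj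
  refine ⟨{z | ∃ c ∈ Wᶜ, z ≤ c}ᶜ, {z | ∃ c ∈ W'ᶜ, c ≤ z}ᶜ, ?_, ?_, ?_, ?_, ?_, ?_, ?_⟩
  · exact (myLowerClosure_isClosed hWo.isClosed_compl).isOpen_compl
  · intro z z' hzz' hz hmem
    obtain ⟨c, hc, hlec⟩ := hmem
    exact hz ⟨c, hc, le_trans hzz' hlec⟩
  · exact (myUpperClosure_isClosed hW'o.isClosed_compl).isOpen_compl
  · intro z z' hz'z hz hmem
    obtain ⟨c, hc, hclec⟩ := hmem
    exact hz ⟨c, hc, le_trans hclec hz'z⟩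
  · rintro ⟨c, hc, hac⟩
    exact hc (hFW hac)
  · rintro ⟨c, hc, hcb⟩
    exact hc (hGW' hcb)
  · ext z
    simp only [Set.mem_inter_iff, Set.mem_compl_iff, Set.mem_setOf_eq, Set.mem_empty_iff_false,
      iff_false, not_and, not_not]
    intro hz1
    by_contra hz2
    -- z ∉ lowerClosure Wᶜ means z ∈ W ; z ∉ upperClosure W'ᶜ means z ∈ W'
    have hzW : z ∈ W := by
      by_contra hzW
      exact hz1 ⟨z, hzW, le_refl z⟩
    have hzW' : z ∈ W' := by
      by_contra hzW'
      exact hz2 ⟨z, hzW', le_refl z⟩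
    exact Set.disjoint_left.mp hWW' hzW hzW'

lemma myIsClosed_of_compSatUp {K : Set Y} (hK : CompSatUp K) : IsClosed K := by
  have hupper := myIsUpperSet_of_compSatUp hK
  obtain ⟨hcomp, -⟩ := hK
  rw [← isOpen_compl_iff, isOpen_iff_forall_mem_open]
  intro x hx
  have h1 : ∀ k ∈ K, ¬ k ≤ x := fun k hk hkx => hx (hupper hkx hk)
  choose! U V hUo hUu hVo hVl hkU hxV hUV using fun k (hk : k ∈ K) => myNachbin (h1 k hk)
  obtain ⟨tf, htf⟩ := mySubcover (upTop Y) hcomp (fun k : K => U k)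
    (fun k => (⟨hUo k k.2, hUu k k.2⟩ : @IsOpen Y (upTop Y) (U k)))
    (fun z hz => Set.mem_iUnion.mpr ⟨⟨z, hz⟩, hkU z hz⟩)
  refine ⟨⋂ k ∈ tf, V (k : Y), ?_, ?_, ?_⟩
  · intro z hz hzK
    obtain ⟨k, hk, hzU⟩ := Set.mem_iUnion₂.mp (htf hzK)
    have hzV : z ∈ V (k : Y) := Set.mem_iInter₂.mp hz k hk
    have : z ∈ U (k : Y) ∩ V (k : Y) := ⟨hzU, hzV⟩
    rw [hUV (k : Y) k.2] at this
    exact this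
  · exact isOpen_biInter_finset fun k _ => hVo k k.2
  · exact Set.mem_iInter₂.mpr fun k _ => hxV k k.2

lemma mySepPointCompact {C : Set Y} (hC : IsCompact C) {y : Y}
    (h : ∀ c ∈ C, ¬ y ≤ c) :
    ∃ U : Set Y, IsOpen U ∧ IsUpperSet U ∧ y ∈ U ∧ U ∩ C = ∅ := by
  choose! U V hUo hUu hVo hVl hyU hcV hUV using fun c (hc : c ∈ C) => myNachbin (h c hc)
  obtain ⟨tf, htf⟩ := hC.elim_finite_subcover (fun c : C => V c) (fun c => hVo c c.2)
    (fun z hz => Set.mem_iUnion.mpr ⟨⟨z, hz⟩, hcV z hz⟩)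
  refine ⟨⋂ c ∈ tf, U (c : Y), isOpen_biInter_finset fun c _ => hUo c c.2, ?_, ?_, ?_⟩
  · intro z z' hzz' hz
    exact Set.mem_iInter₂.mpr fun c hc => hUu c c.2 hzz' (Set.mem_iInter₂.mp hz c hc)
  · exact Set.mem_iInter₂.mpr fun c _ => hyU c c.2
  · ext z
    simp only [Set.mem_inter_iff, Set.mem_empty_iff_false, iff_false, not_and]
    intro hzU hzC
    obtain ⟨c, hc, hzV⟩ := Set.mem_iUnion₂.mp (htf hzC)
    have : z ∈ U (c : Y) ∩ V (c : Y) := ⟨Set.mem_iInter₂.mp hzU c hc, hzV⟩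
    rw [hUV (c : Y) c.2] at this
    exact this

end Aux

lemma myEqLocusOpen {X E : Type*} [tE : TopologicalSpace E] (tX : TopologicalSpace X)
    (p : E → X) (hp : @IsLocalHomeomorph E X tE tX p) (s t : X → E)
    (hs : @Continuous X E tX tE s) (ht : @Continuous X E tX tE t)
    (hps : ∀ y, p (s y) = y) (hpt : ∀ y, p (t y) = y) :
    @IsOpen X tX {y | s y = t y} := by
  letI := tX
  rw [isOpen_iff_forall_mem_open]
  intro y hy
  obtain ⟨e, hmem, hpe⟩ := hp (s y)
  refine ⟨s ⁻¹' e.source ∩ t ⁻¹' e.source, ?_, ?_, ?_, ?_⟩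
  · rintro z ⟨hz1, hz2⟩
    have hz : e (s z) = e (t z) := by
      rw [show (e : E → X) = p from hpe.symm, hps, hpt]
    exact e.injOn hz1 hz2 hz
  · exact (e.open_source.preimage hs).inter (e.open_source.preimage ht)
  · exact hmem
  · show t y ∈ e.source
    rw [show t y = s y from (hy : s y = t y).symm]
    exact hmem

lemma myGlueCWA {X E : Type*} [tX : TopologicalSpace X] [tE : TopologicalSpace E]
    (u f : X → E) (K O : Set X) (hf : Continuous f) (hO : IsOpen O) {y : X} (hyO : y ∈ O)
    (heq : ∀ z ∈ K ∩ O, u z = f z) (hyu : u y = f y) :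
    ContinuousWithinAt u K y := by
  refine (hf.continuousWithinAt).congr_of_eventuallyEq ?_ hyu
  filter_upwards [Filter.le_def.mp nhdsWithin_le_nhds _ (hO.mem_nhds hyO),
    self_mem_nhdsWithin] with z hzO hzK
  exact heq z ⟨hzK, hzO⟩

lemma myCompSatUpUnion {Y : Type*} [TopologicalSpace Y] [Preorder Y]
    {K₁ K₂ : Set Y} (h₁ : CompSatUp K₁) (h₂ : CompSatUp K₂) : CompSatUp (K₁ ∪ K₂) := by
  obtain ⟨hc₁, 𝒰₁, h𝒰₁, hK₁⟩ := h₁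
  obtain ⟨hc₂, 𝒰₂, h𝒰₂, hK₂⟩ := h₂
  refine ⟨@IsCompact.union Y (upTop Y) K₁ K₂ hc₁ hc₂, Set.image2 (· ∪ ·) 𝒰₁ 𝒰₂, ?_, ?_⟩
  · rintro U ⟨U₁, hU₁, U₂, hU₂, rfl⟩
    exact ⟨(h𝒰₁ U₁ hU₁).1.union (h𝒰₂ U₂ hU₂).1, (h𝒰₁ U₁ hU₁).2.union (h𝒰₂ U₂ hU₂).2⟩
  · apply Set.Subset.antisymm
    · rintro x hx
      apply Set.mem_sInter.mpr
      rintro U ⟨U₁, hU₁, U₂, hU₂, rfl⟩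
      rcases hx with hx | hx
      · exact Or.inl (Set.mem_sInter.mp (hK₁ ▸ hx) U₁ hU₁)
      · exact Or.inr (Set.mem_sInter.mp (hK₂ ▸ hx) U₂ hU₂)
    · intro x hx
      by_contra hxK
      rw [Set.mem_union] at hxK
      push_neg at hxK
      obtain ⟨hx₁, hx₂⟩ := hxK
      have h1 : x ∉ ⋂₀ 𝒰₁ := by rw [← hK₁]; exact hx₁
      have h2 : x ∉ ⋂₀ 𝒰₂ := by rw [← hK₂]; exact hx₂
      rw [Set.mem_sInter] at h1 h2
      push_neg at h1 h2
      obtain ⟨U₁, hU₁, hxU₁⟩ := h1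
      obtain ⟨U₂, hU₂, hxU₂⟩ := h2
      rcases Set.mem_sInter.mp hx (U₁ ∪ U₂) ⟨U₁, hU₁, U₂, hU₂, rfl⟩ with h | h
      · exact hxU₁ h
      · exact hxU₂ h

/-- Given a soft local homeomorphism `p : E → Y^↑` over a compact ordered space,
two global sections `s, t` agreeing on `K₁ ∩ K₂` (with `K₁, K₂` compact saturated in
`Y^↑`) can be merged into a global section `u` with `u = s` on `K₁` and `u = t` on `K₂`. -/
theorem stmt6 {Y E : Type*} [TopologicalSpace Y] [CompactSpace Y] [T2Space Y]
    [PartialOrder Y] [OrderClosedTopology Y] [tE : TopologicalSpace E]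
    (p : E → Y) (hp : @IsLocalHomeomorph E Y tE (upTop Y) p) (hsoft : Soft p)
    (K₁ K₂ : Set Y) (hK₁ : CompSatUp K₁) (hK₂ : CompSatUp K₂)
    (s t : Y → E)
    (hs : @Continuous Y E (upTop Y) tE s) (hps : ∀ y, p (s y) = y)
    (ht : @Continuous Y E (upTop Y) tE t) (hpt : ∀ y, p (t y) = y)
    (hst : ∀ y ∈ K₁ ∩ K₂, s y = t y) :
    ∃ u : Y → E, @Continuous Y E (upTop Y) tE u ∧ (∀ y, p (u y) = y) ∧
      (∀ y ∈ K₁, u y = s y) ∧ (∀ y ∈ K₂, u y = t y) := by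
  classical
  set A : Set Y := {y | s y = t y} with hAdef
  have hAopen' : @IsOpen Y (upTop Y) A := myEqLocusOpen (upTop Y) p hp s t hs ht hps hpt
  have hAopen : IsOpen A ∧ IsUpperSet A := hAopen'
  have hK₁up : IsUpperSet K₁ := myIsUpperSet_of_compSatUp hK₁
  have hK₂up : IsUpperSet K₂ := myIsUpperSet_of_compSatUp hK₂
  have hK₁cl : IsClosed K₁ := myIsClosed_of_compSatUp hK₁
  have hK₂cl : IsClosed K₂ := myIsClosed_of_compSatUp hK₂
  set K : Set Y := K₁ ∪ K₂ with hKdef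
  have hK : CompSatUp K := myCompSatUpUnion hK₁ hK₂
  set u₀ : Y → E := fun y => if y ∈ K₁ then s y else t y with hu₀def
  have hite : ∀ z, u₀ z = if z ∈ K₁ then s z else t z := fun z => rfl
  -- u₀ = s on K₁, u₀ = t on K₂
  have hu₀s : ∀ y ∈ K₁, u₀ y = s y := fun y hy => (hite y).trans (if_pos hy)
  have hu₀t : ∀ y ∈ K₂, u₀ y = t y := by
    intro y hy
    rw [hite y]
    by_cases h : y ∈ K₁
    · rw [if_pos h]; exact hst y ⟨h, hy⟩
    · rw [if_neg h]
  have hsecu₀ : ∀ y ∈ K, p (u₀ y) = y := by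
    intro y _
    by_cases h : y ∈ K₁
    · rw [hu₀s y h]; exact hps y
    · rw [hite y, if_neg h]; exact hpt y
  -- continuity of u₀ on K w.r.t. upTop
  have hcont : @ContinuousOn Y E (upTop Y) tE u₀ K := by
    intro y hy
    by_cases hyA : y ∈ A
    · -- near A, u₀ = s
      refine @myGlueCWA Y E (upTop Y) tE u₀ s K A hs hAopen' y hyA ?_ ?_
      · rintro z ⟨-, hzA⟩
        by_cases hz : z ∈ K₁
        · exact hu₀s z hz
        · rw [hite z, if_neg hz]; exact (hzA : s z = t z).symm
      · by_cases hz : y ∈ K₁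
        · exact hu₀s y hz
        · rw [hite y, if_neg hz]; exact (hyA : s y = t y).symm
    · rcases hy with hyK₁ | hyK₂
      · -- y ∈ K₁, y ∉ A (hence y ∉ K₂): separate y from K₂ \ A
        have hCcomp : IsCompact (K₂ \ A) :=
          (hK₂cl.inter hAopen.1.isClosed_compl).isCompact
        have hsep : ∀ c ∈ K₂ \ A, ¬ y ≤ c := by
          rintro c ⟨hcK₂, hcA⟩ hyc
          exact hcA (hst c ⟨hK₁up hyc hyK₁, hcK₂⟩)
        obtain ⟨U, hUo, hUu, hyU, hUdisj⟩ := mySepPointCompact hCcomp hsep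
        have hUo' : @IsOpen Y (upTop Y) U := ⟨hUo, hUu⟩
        refine @myGlueCWA Y E (upTop Y) tE u₀ s K U hs hUo' y hyU ?_ (hu₀s y hyK₁)
        rintro z ⟨hzK, hzU⟩
        by_cases hz : z ∈ K₁
        · exact hu₀s z hz
        · have hzK₂ : z ∈ K₂ := hzK.resolve_left hz
          have hzA : z ∈ A := by
            by_contra hzA
            have : z ∈ U ∩ (K₂ \ A) := ⟨hzU, hzK₂, hzA⟩
            rw [hUdisj] at this
            exact this
          rw [hite z, if_neg hz]; exact (hzA : s z = t z).symm
      · -- y ∈ K₂, y ∉ A (hence y ∉ K₁): separate y from K₁ \ A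
        have hyK₁' : y ∉ K₁ := fun h => hyA (hst y ⟨h, hyK₂⟩)
        have hCcomp : IsCompact (K₁ \ A) :=
          (hK₁cl.inter hAopen.1.isClosed_compl).isCompact
        have hsep : ∀ c ∈ K₁ \ A, ¬ y ≤ c := by
          rintro c ⟨hcK₁, hcA⟩ hyc
          exact hcA (hst c ⟨hcK₁, hK₂up hyc hyK₂⟩)
        obtain ⟨U, hUo, hUu, hyU, hUdisj⟩ := mySepPointCompact hCcomp hsep
        have hUo' : @IsOpen Y (upTop Y) U := ⟨hUo, hUu⟩
        refine @myGlueCWA Y E (upTop Y) tE u₀ t K U ht hUo' y hyU ?_ (hu₀t y hyK₂)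
        rintro z ⟨hzK, hzU⟩
        by_cases hz : z ∈ K₁
        · have hzA : z ∈ A := by
            by_contra hzA
            have : z ∈ U ∩ (K₁ \ A) := ⟨hzU, hz, hzA⟩
            rw [hUdisj] at this
            exact this
          rw [hite z, if_pos hz]; exact (hzA : s z = t z)
        · rw [hite z, if_neg hz]
  obtain ⟨u, hucont, husec, hueq⟩ := hsoft K hK u₀ hcont hsecu₀
  refine ⟨u, hucont, husec, ?_, ?_⟩
  · intro y hy
    rw [hueq (Set.mem_union_left _ hy)]
    exact hu₀s y hy
  · intro y hy
    rw [hueq (Set.mem_union_right _ hy)]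
    exact hu₀t y hy
end

section
/- Let (Y, π, ≤) be a compact ordered space, p : E → Y^↑ a local homeomorphism, and s, t global sections of p. Let (K_i)_{i∈I} be a nonempty family of compact saturated subsets of Y^↑ that is down-directed (for all i, j ∈ I there exists k ∈ I with K_k ⊆ K_i ∩ K_j). If s(y) = t(y) for all y ∈ ⋂_{i∈I} K_i, then there exists i ∈ I such that s(y) = t(y) for all y ∈ K_i. -/
/-!
The equalizer of two sections of a local homeomorphism is open in `Y^↑`, hence open in `Y`.
Each `K i` is closed in `Y`: a point `y ∉ K i` satisfies `¬ k ≤ y` for every `k ∈ K i`, and in a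
compact ordered space such `k` and `y` have disjoint neighbourhoods, the one of `k` an open upper
set; compactness of `K i` in `Y^↑` makes these finitely many. In the compact space `Y`, a
down-directed family of closed sets whose intersection lies in an open set has a member inside it.
-/

open Filter Topology Set

lemma isOpen_upTop_iff {Y : Type*} [TopologicalSpace Y] [Preorder Y] {U : Set Y} :
    IsOpen[upTop Y] U ↔ IsOpen U ∧ IsUpperSet U :=
  Iff.rfl

section CompactOrderedSpace

variable {Y : Type*} [TopologicalSpace Y] [CompactSpace Y] [T2Space Y] [Preorder Y]
  [OrderClosedTopology Y]

lemma IsClosed.lowerClosure_of_compactSpace {C : Set Y} (hC : IsClosed C) :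
    IsClosed (lowerClosure C : Set Y) := by
  have hgraph : IsClosed {q : Y × Y | q.1 ∈ C ∧ q.2 ≤ q.1} :=
    (hC.preimage continuous_fst).inter (_root_.isClosed_le continuous_snd continuous_fst)
  have himage : (lowerClosure C : Set Y) = Prod.snd '' {q : Y × Y | q.1 ∈ C ∧ q.2 ≤ q.1} := by
    ext x
    simp [lowerClosure, and_comm]
  rw [himage]
  exact (hgraph.isCompact.image continuous_snd).isClosed

lemma disjoint_nhds_upTop_nhds_of_not_le {k y : Y} (hky : ¬ k ≤ y) :
    Disjoint (@nhds Y (upTop Y) k) (𝓝 y) := by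
  have hsep : Disjoint (𝓝ˢ (Ici k)) (𝓝 y) := by
    rw [← nhdsSet_singleton]
    exact disjoint_nhdsSet_nhdsSet isClosed_Ici isClosed_singleton
      (disjoint_singleton_right.2 hky)
  obtain ⟨W, ⟨hW, hkW⟩, hWy⟩ := (hasBasis_nhdsSet _).disjoint_iff_left.1 hsep
  -- The largest upper set inside `W`; it is open because lower closures of closed sets are closed.
  set U : Set Y := (lowerClosure Wᶜ : Set Y)ᶜ
  have hU : IsOpen[upTop Y] U :=
    isOpen_upTop_iff.2 ⟨hW.isClosed_compl.lowerClosure_of_compactSpace.isOpen_compl,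
      (lowerClosure _).lower.compl⟩
  have hkU : k ∈ U := fun ⟨w, hw, hkw⟩ => hw (hkW hkw)
  have hUW : U ⊆ W := fun x hx => by_contra fun hxW => hx ⟨x, hxW, le_rfl⟩
  exact disjoint_of_disjoint_of_mem (disjoint_compl_right.mono_left hUW)
    (@IsOpen.mem_nhds Y (upTop Y) _ _ hU hkU) hWy

lemma IsUpperSet.isClosed_of_isCompact_upTop {K : Set Y} (hup : IsUpperSet K)
    (hK : @IsCompact Y (upTop Y) K) : IsClosed K := by
  refine isOpen_compl_iff.1 (isOpen_iff_mem_nhds.2 fun y hy => ?_)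
  have hdisj : Disjoint (@nhdsSet Y (upTop Y) K) (𝓝 y) :=
    (@IsCompact.disjoint_nhdsSet_left Y (upTop Y) _ _ hK).2 fun k hk =>
      disjoint_nhds_upTop_nhds_of_not_le fun hky => hy (hup hky hk)
  exact disjoint_principal_left.1 (hdisj.mono_left (@principal_le_nhdsSet Y (upTop Y) K))

end CompactOrderedSpace

namespace CompSatUp

variable {Y : Type*} [TopologicalSpace Y] [Preorder Y] {K : Set Y}

lemma isUpperSet (hK : CompSatUp K) : IsUpperSet K := by
  obtain ⟨-, 𝒰, h𝒰, rfl⟩ := hK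
  exact isUpperSet_sInter fun U hU => (h𝒰 U hU).2

lemma isClosed [CompactSpace Y] [T2Space Y] [OrderClosedTopology Y] (hK : CompSatUp K) :
    IsClosed K :=
  hK.isUpperSet.isClosed_of_isCompact_upTop hK.1

end CompSatUp

theorem stmt7_general {Y E : Type*} [TopologicalSpace Y] [CompactSpace Y]
    [PartialOrder Y] [OrderClosedTopology Y] [tE : TopologicalSpace E]
    (p : E → Y) (hp : @IsLocalHomeomorph E Y tE (upTop Y) p)
    (s t : Y → E)
    (hs : @Continuous Y E (upTop Y) tE s) (hps : ∀ y, p (s y) = y)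
    (ht : @Continuous Y E (upTop Y) tE t) (hpt : ∀ y, p (t y) = y)
    {ι : Type*} [Nonempty ι] (K : ι → Set Y) (hK : ∀ i, CompSatUp (K i))
    (hdir : ∀ i j : ι, ∃ k : ι, K k ⊆ K i ∩ K j)
    (hagree : ∀ y ∈ ⋂ i, K i, s y = t y) :
    ∃ i : ι, ∀ y ∈ K i, s y = t y := by
  have hequalizer : IsOpen[upTop Y] {y | s y = t y} :=
    @IsLocallyInjective.isOpen_eqLocus _ _ _ _ (upTop Y) _ _ _ hs ht
      (@IsLocalHomeomorph.isLocallyInjective _ _ _ (upTop Y) _ hp)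
      (funext fun y => (hps y).trans (hpt y).symm)
  have hdirected : Directed (· ⊇ ·) K := fun i j =>
    (hdir i j).imp fun _ hk => ⟨hk.trans inter_subset_left, hk.trans inter_subset_right⟩
  exact exists_subset_nhds_of_compactSpace hdirected (fun i => (hK i).isClosed)
    fun y hy => (isOpen_upTop_iff.1 hequalizer).1.mem_nhds (hagree y hy)

/-- Let `p : E → Y^↑` be a local homeomorphism over a compact ordered space and let
`s, t` be global sections of `p`. If `s` and `t` agree on the intersection of a nonempty
down-directed family of compact saturated subsets of `Y^↑`, then they already agree on
some member of the family. -/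
theorem stmt7 {Y E : Type*} [TopologicalSpace Y] [CompactSpace Y] [T2Space Y]
    [PartialOrder Y] [OrderClosedTopology Y] [tE : TopologicalSpace E]
    (p : E → Y) (hp : @IsLocalHomeomorph E Y tE (upTop Y) p)
    (s t : Y → E)
    (hs : @Continuous Y E (upTop Y) tE s) (hps : ∀ y, p (s y) = y)
    (ht : @Continuous Y E (upTop Y) tE t) (hpt : ∀ y, p (t y) = y)
    {ι : Type*} [Nonempty ι] (K : ι → Set Y) (hK : ∀ i, CompSatUp (K i))
    (hdir : ∀ i j : ι, ∃ k : ι, K k ⊆ K i ∩ K j)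
    (hagree : ∀ y ∈ ⋂ i, K i, s y = t y) :
    ∃ i : ι, ∀ y ∈ K i, s y = t y :=
  stmt7_general (tE := tE) p hp s t hs hps ht hpt K hK hdir hagree
end

section
/- Let (Y, π, ≤) be a compact ordered space and A a set. Let θ be a map assigning to each compact saturated subset of Y^↑ an equivalence relation on A, and suppose: (a) for every family (K_i)_{i∈I} of compact saturated subsets of Y^↑, θ(⋂_{i∈I} K_i) = ⨆_{i∈I} θ(K_i), the supremum taken in the complete lattice of equivalence relations on A (for I = ∅ this says θ(Y) is the identity relation; note that arbitrary intersections of compact saturated subsets of Y^↑ are again compact saturated); (b) θ(K ∪ L) = θ(K) ∩ θ(L) for all compact saturated K, L, and θ(∅) = A × A. Then: (1) for every compact saturated K of Y^↑, θ(K) = ⋃ {θ(K') : K' compact saturated in Y^↑ with K ≺ K'}; (2) for every compact saturated K of Y^↑ and all a, b ∈ A: (a, b) ∈ θ(K) if and only if (a, b) ∈ θ(↑y) for every y ∈ K, where ↑y = {x ∈ Y : y ≤ x} (a compact saturated subset of Y^↑). -/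
/-!
In a compact ordered space the compact saturated subsets of `Y^↑` are exactly the closed upper
sets. Nachbin's separation (a closed upper set and a disjoint closed lower set have disjoint open
upper and open lower neighbourhoods, by the tube lemma applied to the closed graph of `≤`) lets
one squeeze a closed upper set between a compact saturated `K` and any open upper `U ⊇ K`. Hence
`K` is the intersection of the `K'` with `K ≺ K'`. This family is closed under finite
intersections and `θ` is antitone by (b), so by (a) `θ K` is a directed supremum of equivalence
relations, which is just their union: this is (1).

For (2), apply (1) to each `↑y` with `y ∈ K`: this gives a `π^↑`-open neighbourhood of `y` inside
some `K'` with `(a, b) ∈ θ K'`. Finitely many of them cover `K`, and by (b) the union `L` of the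
corresponding `K'` satisfies `(a, b) ∈ θ L ⊆ θ K`.
-/

theorem mem_nhdsWithin_upTop {Y : Type*} [TopologicalSpace Y] [Preorder Y] {s U : Set Y} {y : Y}
    (hU : IsOpen U) (hUu : IsUpperSet U) (hy : y ∈ U) : U ∈ @nhdsWithin Y (upTop Y) y s :=
  @mem_nhdsWithin_of_mem_nhds Y (upTop Y) _ _ _ (@IsOpen.mem_nhds Y (upTop Y) _ _ ⟨hU, hUu⟩ hy)

section CompactOrderedSpace

variable {Y : Type*} [TopologicalSpace Y] [CompactSpace Y] [Preorder Y] [OrderClosedTopology Y]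

theorem isClosed_lowerClosure_of_compactSpace {s : Set Y} (hs : IsClosed s) :
    IsClosed (lowerClosure s : Set Y) := by
  have : (lowerClosure s : Set Y) = Prod.fst '' ({p : Y × Y | p.1 ≤ p.2} ∩ Prod.snd ⁻¹' s) := by
    ext y
    simp [mem_lowerClosure, and_comm]
  rw [this]
  exact isClosedMap_fst_of_compactSpace _ (isClosed_le_prod.inter (hs.preimage continuous_snd))

theorem isClosed_upperClosure_of_compactSpace {s : Set Y} (hs : IsClosed s) :
    IsClosed (upperClosure s : Set Y) :=
  haveI : CompactSpace Yᵒᵈ := ‹CompactSpace Y›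
  isClosed_lowerClosure_of_compactSpace (Y := Yᵒᵈ) hs

theorem exists_isOpen_isUpperSet_isLowerSet_disjoint {K L : Set Y} (hK : IsClosed K)
    (hKu : IsUpperSet K) (hL : IsClosed L) (hLl : IsLowerSet L) (hKL : Disjoint K L) :
    ∃ U V : Set Y, IsOpen U ∧ IsUpperSet U ∧ IsOpen V ∧ IsLowerSet V ∧
      K ⊆ U ∧ L ⊆ V ∧ Disjoint U V := by
  have hprod : K ×ˢ L ⊆ {p : Y × Y | p.1 ≤ p.2}ᶜ := fun p hp hle =>
    hKL.notMem_of_mem_left (hKu hle hp.1) hp.2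
  obtain ⟨N, M, hN, hM, hKN, hLM, hNM⟩ :=
    generalized_tube_lemma hK.isCompact hL.isCompact isClosed_le_prod.isOpen_compl hprod
  refine ⟨(lowerClosure Nᶜ : Set Y)ᶜ, (upperClosure Mᶜ : Set Y)ᶜ,
    (isClosed_lowerClosure_of_compactSpace hN.isClosed_compl).isOpen_compl,
    (lowerClosure Nᶜ).lower.compl,
    (isClosed_upperClosure_of_compactSpace hM.isClosed_compl).isOpen_compl,
    (upperClosure Mᶜ).upper.compl, ?_, ?_, ?_⟩
  · rintro x hx ⟨y, hyN, hxy⟩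
    exact hyN (hKN (hKu hxy hx))
  · rintro x hx ⟨y, hyM, hyx⟩
    exact hyM (hLM (hLl hyx hx))
  · refine Set.disjoint_left.2 fun x hxU hxV => hNM (Set.mk_mem_prod ?_ ?_) (le_refl x)
    · by_contra hxN; exact hxU ⟨x, hxN, le_rfl⟩
    · by_contra hxM; exact hxV ⟨x, hxM, le_rfl⟩

theorem exists_isOpen_subset_isClosed_subset {K U : Set Y} (hK : @IsCompact Y (upTop Y) K)
    (hU : IsOpen U) (hUu : IsUpperSet U) (hKU : K ⊆ U) :
    ∃ V C : Set Y, IsOpen V ∧ IsUpperSet V ∧ IsClosed C ∧ IsUpperSet C ∧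
      K ⊆ V ∧ V ⊆ C ∧ C ⊆ U := by
  refine @IsCompact.induction_on Y (upTop Y) K hK (fun s => ∃ V C : Set Y, IsOpen V ∧
      IsUpperSet V ∧ IsClosed C ∧ IsUpperSet C ∧ s ⊆ V ∧ V ⊆ C ∧ C ⊆ U) ?_ ?_ ?_ ?_
  · exact ⟨∅, ∅, isOpen_empty, isUpperSet_empty, isClosed_empty, isUpperSet_empty,
      subset_rfl, subset_rfl, Set.empty_subset U⟩
  · rintro s t hst ⟨V, C, hV, hVu, hC, hCu, htV, hVC, hCU⟩
    exact ⟨V, C, hV, hVu, hC, hCu, hst.trans htV, hVC, hCU⟩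
  · rintro s t ⟨V, C, hV, hVu, hC, hCu, hsV, hVC, hCU⟩
      ⟨V', C', hV', hVu', hC', hCu', htV', hVC', hCU'⟩
    exact ⟨V ∪ V', C ∪ C', hV.union hV', hVu.union hVu', hC.union hC', hCu.union hCu',
      Set.union_subset_union hsV htV', Set.union_subset_union hVC hVC',
      Set.union_subset hCU hCU'⟩
  · intro y hy
    have hdisj : Disjoint (Set.Ici y) Uᶜ :=
      Set.disjoint_left.2 fun z hyz hzU => hzU (hUu hyz (hKU hy))
    obtain ⟨V, W, hV, hVu, hW, hWl, hyV, hUW, hVW⟩ :=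
      exists_isOpen_isUpperSet_isLowerSet_disjoint isClosed_Ici (isUpperSet_Ici y)
        hU.isClosed_compl hUu.compl hdisj
    exact ⟨V, mem_nhdsWithin_upTop hV hVu (hyV Set.self_mem_Ici), V, Wᶜ, hV, hVu,
      hW.isClosed_compl, hWl.compl, subset_rfl, hVW.subset_compl_right,
      Set.compl_subset_comm.1 hUW⟩

theorem compSatUp_iff {K : Set Y} : CompSatUp K ↔ IsClosed K ∧ IsUpperSet K := by
  constructor
  · rintro ⟨hK, 𝒰, h𝒰, rfl⟩
    have hsub : ∀ U ∈ 𝒰, ∃ C, IsClosed C ∧ ⋂₀ 𝒰 ⊆ C ∧ C ⊆ U := fun U hU => by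
      obtain ⟨V, C, -, -, hC, -, hKV, hVC, hCU⟩ := exists_isOpen_subset_isClosed_subset hK
        (h𝒰 U hU).1 (h𝒰 U hU).2 (Set.sInter_subset_of_mem hU)
      exact ⟨C, hC, hKV.trans hVC, hCU⟩
    choose! C hC hKC hCU using hsub
    have hK_eq : ⋂₀ 𝒰 = ⋂ U ∈ 𝒰, C U :=
      (Set.subset_iInter₂ hKC).antisymm (Set.sInter_eq_biInter ▸ Set.iInter₂_mono hCU)
    exact ⟨hK_eq ▸ isClosed_biInter hC, isUpperSet_sInter fun U hU => (h𝒰 U hU).2⟩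
  · rintro ⟨hK, hKu⟩
    refine ⟨Set.image_id K ▸ @IsCompact.image Y Y _ (upTop Y) K id hK.isCompact
      (continuous_id_of_le fun U hU => hU.1),
      {U | IsOpen U ∧ IsUpperSet U ∧ K ⊆ U}, fun U hU => ⟨hU.1, hU.2.1⟩, ?_⟩
    refine (Set.subset_sInter fun U hU => hU.2.2).antisymm fun x hx => ?_
    by_contra hxK
    have hdisj : Disjoint K (Set.Iic x) :=
      Set.disjoint_left.2 fun y hy hyx => hxK (hKu hyx hy)
    obtain ⟨U, V, hU, hUu, -, -, hKU, hxV, hUV⟩ :=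
      exists_isOpen_isUpperSet_isLowerSet_disjoint hK hKu isClosed_Iic (isLowerSet_Iic x) hdisj
    exact hUV.notMem_of_mem_right (hxV le_rfl) (hx U ⟨hU, hUu, hKU⟩)

theorem CompSatUp.inter {K L : Set Y} (hK : CompSatUp K) (hL : CompSatUp L) :
    CompSatUp (K ∩ L) := by
  rw [compSatUp_iff] at *
  exact ⟨hK.1.inter hL.1, hK.2.inter hL.2⟩

theorem CompSatUp.union {K L : Set Y} (hK : CompSatUp K) (hL : CompSatUp L) :
    CompSatUp (K ∪ L) := by
  rw [compSatUp_iff] at *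
  exact ⟨hK.1.union hL.1, hK.2.union hL.2⟩

theorem compSatUp_Ici (y : Y) : CompSatUp (Set.Ici y) :=
  compSatUp_iff.2 ⟨isClosed_Ici, isUpperSet_Ici y⟩

theorem compSatUp_empty : CompSatUp (∅ : Set Y) :=
  compSatUp_iff.2 ⟨isClosed_empty, isUpperSet_empty⟩

theorem compSatUp_univ : CompSatUp (Set.univ : Set Y) :=
  compSatUp_iff.2 ⟨isClosed_univ, isUpperSet_univ⟩

theorem sInter_setOf_wayBelow {K : Set Y} (hK : CompSatUp K) :
    ⋂₀ {K' | CompSatUp K' ∧ WayBelow K K'} = K := by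
  refine Set.Subset.antisymm (fun x hx => ?_) fun y hy => Set.mem_sInter.2 ?_
  · obtain ⟨𝒰, h𝒰, rfl⟩ := hK.2
    refine Set.mem_sInter.2 fun U hU => ?_
    obtain ⟨V, C, hV, hVu, hC, hCu, hKV, hVC, hCU⟩ := exists_isOpen_subset_isClosed_subset hK.1
      (h𝒰 U hU).1 (h𝒰 U hU).2 (Set.sInter_subset_of_mem hU)
    exact hCU (hx C ⟨compSatUp_iff.2 ⟨hC, hCu⟩, V, hV, hVu, hKV, hVC⟩)
  · rintro K' ⟨-, U, -, -, hKU, hUK'⟩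
    exact hUK' (hKU hy)

end CompactOrderedSpace

theorem WayBelow.inter {Y : Type*} [TopologicalSpace Y] [Preorder Y] {K K₁ K₂ : Set Y}
    (h₁ : WayBelow K K₁) (h₂ : WayBelow K K₂) : WayBelow K (K₁ ∩ K₂) := by
  obtain ⟨U₁, hU₁, hU₁u, hKU₁, hU₁K⟩ := h₁
  obtain ⟨U₂, hU₂, hU₂u, hKU₂, hU₂K⟩ := h₂
  exact ⟨U₁ ∩ U₂, hU₁.inter hU₂, hU₁u.inter hU₂u, Set.subset_inter hKU₁ hKU₂,
    Set.inter_subset_inter hU₁K hU₂K⟩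

theorem Setoid.sSup_rel_iff_of_directedOn {A : Type*} {S : Set (Setoid A)} (hne : S.Nonempty)
    (hS : DirectedOn (· ≤ ·) S) {a b : A} : (sSup S).r a b ↔ ∃ r ∈ S, r.r a b := by
  let s : Setoid A :=
    { r := fun a b => ∃ r ∈ S, r.r a b
      iseqv :=
        { refl := fun a => hne.elim fun r hr => ⟨r, hr, r.refl a⟩
          symm := fun ⟨r, hr, h⟩ => ⟨r, hr, r.symm h⟩
          trans := fun ⟨r, hr, h⟩ ⟨r', hr', h'⟩ =>
            let ⟨t, ht, hrt, hr't⟩ := hS r hr r' hr'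
            ⟨t, ht, t.trans (hrt h) (hr't h')⟩ } }
  exact ⟨fun h => sSup_le (a := s) (fun r hr _ _ h => ⟨r, hr, h⟩) h,
    fun ⟨r, hr, h⟩ => le_sSup hr h⟩

section Theta

variable {Y : Type*} [TopologicalSpace Y] {A : Type*} {θ : Set Y → Setoid A}

theorem le_of_subset_of_map_union_eq_inf [Preorder Y]
    (hb : ∀ K L : Set Y, CompSatUp K → CompSatUp L → θ (K ∪ L) = θ K ⊓ θ L)
    {K L : Set Y} (hK : CompSatUp K) (hL : CompSatUp L) (hKL : K ⊆ L) : θ L ≤ θ K := by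
  rw [← Set.union_eq_self_of_subset_left hKL, hb K L hK hL]
  exact inf_le_left

variable [CompactSpace Y] [Preorder Y] [OrderClosedTopology Y]

theorem rel_iff_exists_wayBelow
    (ha : ∀ 𝒦 : Set (Set Y), (∀ K ∈ 𝒦, CompSatUp K) → θ (⋂₀ 𝒦) = ⨆ K ∈ 𝒦, θ K)
    (hb : ∀ K L : Set Y, CompSatUp K → CompSatUp L → θ (K ∪ L) = θ K ⊓ θ L)
    {K : Set Y} (hK : CompSatUp K) (a b : A) :
    (θ K).r a b ↔ ∃ K' : Set Y, CompSatUp K' ∧ WayBelow K K' ∧ (θ K').r a b := by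
  set 𝒦 := {K' | CompSatUp K' ∧ WayBelow K K'}
  have hne : (θ '' 𝒦).Nonempty :=
    ⟨_, Set.mem_image_of_mem θ ⟨compSatUp_univ, Set.univ, isOpen_univ, isUpperSet_univ,
      Set.subset_univ K, subset_rfl⟩⟩
  have hdir : DirectedOn (· ≤ ·) (θ '' 𝒦) := by
    rintro _ ⟨K₁, h₁, rfl⟩ _ ⟨K₂, h₂, rfl⟩
    have h₁₂ : K₁ ∩ K₂ ∈ 𝒦 := ⟨h₁.1.inter h₂.1, h₁.2.inter h₂.2⟩
    exact ⟨_, Set.mem_image_of_mem θ h₁₂,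
      le_of_subset_of_map_union_eq_inf hb h₁₂.1 h₁.1 Set.inter_subset_left,
      le_of_subset_of_map_union_eq_inf hb h₁₂.1 h₂.1 Set.inter_subset_right⟩
  have hθK : θ K = sSup (θ '' 𝒦) := by
    rw [sSup_image, ← ha 𝒦 fun K' hK' => hK'.1, sInter_setOf_wayBelow hK]
  rw [hθK, Setoid.sSup_rel_iff_of_directedOn hne hdir, Set.exists_mem_image]
  simp only [𝒦, Set.mem_ofPred_eq, and_assoc]

theorem rel_iff_forall_rel_Ici
    (ha : ∀ 𝒦 : Set (Set Y), (∀ K ∈ 𝒦, CompSatUp K) → θ (⋂₀ 𝒦) = ⨆ K ∈ 𝒦, θ K)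
    (hb : ∀ K L : Set Y, CompSatUp K → CompSatUp L → θ (K ∪ L) = θ K ⊓ θ L)
    (hempty : θ ∅ = ⊤) {K : Set Y} (hK : CompSatUp K) (a b : A) :
    (θ K).r a b ↔ ∀ y ∈ K, (θ (Set.Ici y)).r a b := by
  refine ⟨fun h y hy => le_of_subset_of_map_union_eq_inf hb (compSatUp_Ici y) hK
    ((compSatUp_iff.1 hK).2.Ici_subset hy) h, fun h => ?_⟩
  obtain ⟨L, hL, hKL, hab⟩ : ∃ L, CompSatUp L ∧ K ⊆ L ∧ (θ L).r a b := by
    refine @IsCompact.induction_on Y (upTop Y) K hK.1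
      (fun s => ∃ L, CompSatUp L ∧ s ⊆ L ∧ (θ L).r a b) ?_ ?_ ?_ ?_
    · exact ⟨∅, compSatUp_empty, subset_rfl, hempty ▸ trivial⟩
    · rintro s t hst ⟨L, hL, htL, hab⟩
      exact ⟨L, hL, hst.trans htL, hab⟩
    · rintro s t ⟨L, hL, hsL, hab⟩ ⟨L', hL', htL', hab'⟩
      exact ⟨L ∪ L', hL.union hL', Set.union_subset_union hsL htL',
        (hb L L' hL hL').symm ▸ ⟨hab, hab'⟩⟩
    · intro y hy
      obtain ⟨L, hL, ⟨U, hU, hUu, hyU, hUL⟩, hab⟩ :=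
        (rel_iff_exists_wayBelow ha hb (compSatUp_Ici y) a b).1 (h y hy)
      exact ⟨U, mem_nhdsWithin_upTop hU hUu (hyU Set.self_mem_Ici), L, hL, hUL, hab⟩
  exact le_of_subset_of_map_union_eq_inf hb hK hL hKL hab

end Theta

theorem stmt8_general {Y : Type*} [TopologicalSpace Y] [CompactSpace Y]
    [PartialOrder Y] [OrderClosedTopology Y]
    {A : Type*} (θ : Set Y → Setoid A)
    (ha : ∀ 𝒦 : Set (Set Y), (∀ K ∈ 𝒦, CompSatUp K) → θ (⋂₀ 𝒦) = ⨆ K ∈ 𝒦, θ K)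
    (hb : ∀ K L : Set Y, CompSatUp K → CompSatUp L → θ (K ∪ L) = θ K ⊓ θ L)
    (hempty : θ ∅ = ⊤) :
    (∀ K : Set Y, CompSatUp K → ∀ a b : A,
        (θ K).r a b ↔ ∃ K' : Set Y, CompSatUp K' ∧ WayBelow K K' ∧ (θ K').r a b) ∧
    (∀ K : Set Y, CompSatUp K → ∀ a b : A,
        (θ K).r a b ↔ ∀ y ∈ K, (θ (Set.Ici y)).r a b) :=
  ⟨fun _ hK => rel_iff_exists_wayBelow ha hb hK, fun _ hK => rel_iff_forall_rel_Ici ha hb hempty hK⟩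

/-- Let `(Y, π, ≤)` be a compact ordered space and `θ` assign to subsets of `Y`
equivalence relations on a set `A` such that
(a) for every family `𝒦` of compact saturated subsets of `Y^↑`,
    `θ (⋂ 𝒦) = ⨆ K ∈ 𝒦, θ K` in the complete lattice of equivalence relations
    (the case `𝒦 = ∅` saying `θ Y = ⊥`, the identity relation), and
(b) `θ (K ∪ L) = θ K ⊓ θ L` for compact saturated `K, L` and `θ ∅ = ⊤` (all of `A × A`).
Then for compact saturated `K` in `Y^↑`:
(1) `θ K` is the union of the `θ K'` over compact saturated `K'` with `K ≺ K'`;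
(2) `(a, b) ∈ θ K` iff `(a, b) ∈ θ (↑y)` for every `y ∈ K`. -/
theorem stmt8 {Y : Type*} [TopologicalSpace Y] [CompactSpace Y] [T2Space Y]
    [PartialOrder Y] [OrderClosedTopology Y]
    {A : Type*} (θ : Set Y → Setoid A)
    (ha : ∀ 𝒦 : Set (Set Y), (∀ K ∈ 𝒦, CompSatUp K) → θ (⋂₀ 𝒦) = ⨆ K ∈ 𝒦, θ K)
    (hb : ∀ K L : Set Y, CompSatUp K → CompSatUp L → θ (K ∪ L) = θ K ⊓ θ L)
    (hempty : θ ∅ = ⊤) :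
    (∀ K : Set Y, CompSatUp K → ∀ a b : A,
        (θ K).r a b ↔ ∃ K' : Set Y, CompSatUp K' ∧ WayBelow K K' ∧ (θ K').r a b) ∧
    (∀ K : Set Y, CompSatUp K → ∀ a b : A,
        (θ K).r a b ↔ ∀ y ∈ K, (θ (Set.Ici y)).r a b) :=
  stmt8_general θ ha hb hempty
end

section
/- Let X be a Priestley space with order ≤_X and A(X) its lattice of clopen lower sets, let (Y, τ, ≤_Y) be a compact ordered space, and let q : X → Y be continuous when Y carries the lower topology τ^↓. The following are equivalent: (1) q is interpolating; (2) for all τ^↓-open sets U_1, U_2 ⊆ Y, the lattice congruences θ_{q^{-1}(Y ∖ U_1)} and θ_{q^{-1}(Y ∖ U_2)} on A(X) commute (note that q^{-1}(Y ∖ U_i) is closed in X by continuity of q). -/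
/-- The *lower topology* `τ^↓` associated to a topology and a preorder:
its open sets are exactly the open lower sets. -/
def lowTop (Y : Type*) [TopologicalSpace Y] [Preorder Y] : TopologicalSpace Y where
  IsOpen U := IsOpen U ∧ IsLowerSet U
  isOpen_univ := ⟨isOpen_univ, isLowerSet_univ⟩
  isOpen_inter := fun _ _ hU hV => ⟨hU.1.inter hV.1, hU.2.inter hV.2⟩
  isOpen_sUnion := fun _ hS =>
    ⟨isOpen_sUnion fun U hU => (hS U hU).1, isLowerSet_sUnion fun U hU => (hS U hU).2⟩

/-- Two equivalence relations *commute* if their relational compositions coincide. -/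
def SetoidCommute {A : Type*} (α β : Setoid A) : Prop :=
  ∀ a c : A, (∃ b, α.r a b ∧ β.r b c) ↔ (∃ b, β.r a b ∧ α.r b c)

/-- For a subset `C` of `X`, the congruence `θ_C` on the lattice of clopen lower sets of
`X` identifying `a` and `b` iff `a ∩ C = b ∩ C`. -/
def thetaC {X : Type*} [TopologicalSpace X] [Preorder X] (C : Set X) :
    Setoid {a : Set X // IsClopen a ∧ IsLowerSet a} where
  r a b := a.1 ∩ C = b.1 ∩ C
  iseqv := ⟨fun _ => rfl, fun h => h.symm, fun h₁ h₂ => h₁.trans h₂⟩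

/-- A map between preorders is *interpolating* if for all `x₁ ≤ x₂` there is
`z` with `x₁ ≤ z ≤ x₂`, `q x₁ ≤ q z` and `q x₂ ≤ q z`. -/
def Interpolating {X Y : Type*} [Preorder X] [Preorder Y] (q : X → Y) : Prop :=
  ∀ x₁ x₂ : X, x₁ ≤ x₂ → ∃ z : X, x₁ ≤ z ∧ z ≤ x₂ ∧ q x₁ ≤ q z ∧ q x₂ ≤ q z

section PriestleyAux

set_option linter.unusedSectionVars false


variable {X : Type*} [TopologicalSpace X] [PartialOrder X] [PriestleySpace X]

lemma priestley_isClosed_le : IsClosed {p : X × X | p.1 ≤ p.2} := by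
  rw [← isOpen_compl_iff]
  rw [isOpen_iff_forall_mem_open]
  rintro ⟨x, y⟩ h
  obtain ⟨U, hU, hUup, hx, hy⟩ := exists_isClopen_upper_of_not_le h
  exact ⟨U ×ˢ Uᶜ, fun p hp hle => hp.2 (hUup hle hp.1),
    hU.isOpen.prod hU.compl.isOpen, ⟨hx, hy⟩⟩

lemma priestley_isClosed_Ici (x : X) : IsClosed (Set.Ici x) := by
  have h : Set.Ici x = (fun y => ((x, y) : X × X)) ⁻¹' {p : X × X | p.1 ≤ p.2} := rfl
  rw [h]
  exact priestley_isClosed_le.preimage (continuous_const.prodMk continuous_id)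

lemma priestley_isClosed_Iic (x : X) : IsClosed (Set.Iic x) := by
  have h : Set.Iic x = (fun y => ((y, x) : X × X)) ⁻¹' {p : X × X | p.1 ≤ p.2} := rfl
  rw [h]
  exact priestley_isClosed_le.preimage (continuous_id.prodMk continuous_const)

variable [CompactSpace X]

lemma priestley_isClosed_up {S : Set X} (hS : IsClosed S) :
    IsClosed {y : X | ∃ s ∈ S, s ≤ y} := by
  have h : {y : X | ∃ s ∈ S, s ≤ y} =
      Prod.snd '' ({p : X × X | p.1 ≤ p.2} ∩ S ×ˢ (Set.univ : Set X)) := by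
    ext y
    constructor
    · rintro ⟨s, hs, hle⟩
      exact ⟨(s, y), ⟨hle, hs, trivial⟩, rfl⟩
    · rintro ⟨p, ⟨hle, hs, -⟩, rfl⟩
      exact ⟨p.1, hs, hle⟩
  rw [h]
  exact (((hS.isCompact.prod isCompact_univ).inter_left
    priestley_isClosed_le).image continuous_snd).isClosed

lemma priestley_isClosed_down {S : Set X} (hS : IsClosed S) :
    IsClosed {y : X | ∃ s ∈ S, y ≤ s} := by
  have h : {y : X | ∃ s ∈ S, y ≤ s} =
      Prod.fst '' ({p : X × X | p.1 ≤ p.2} ∩ (Set.univ : Set X) ×ˢ S) := by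
    ext y
    constructor
    · rintro ⟨s, hs, hle⟩
      exact ⟨(y, s), ⟨hle, trivial, hs⟩, rfl⟩
    · rintro ⟨p, ⟨hle, -, hs⟩, rfl⟩
      exact ⟨p.2, hs, hle⟩
  rw [h]
  exact (((isCompact_univ.prod hS.isCompact).inter_left
    priestley_isClosed_le).image continuous_fst).isClosed

/-- Priestley separation for compact sets: if no point of `T` is below a point of `S`,
there is a clopen lower set containing `S` and disjoint from `T`. -/
lemma priestley_sep {S T : Set X} (hS : IsCompact S) (hT : IsCompact T)
    (h : ∀ t ∈ T, ∀ s ∈ S, ¬ t ≤ s) :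
    ∃ L : Set X, IsClopen L ∧ IsLowerSet L ∧ S ⊆ L ∧ ∀ t ∈ T, t ∉ L := by
  have step1 : ∀ t : T, ∃ L : Set X, IsClopen L ∧ IsLowerSet L ∧ S ⊆ L ∧ (t : X) ∉ L := by
    rintro ⟨t, ht⟩
    choose V hV1 hV2 hV3 hV4 using fun s : S =>
      exists_isClopen_lower_of_not_le (h t ht s s.2)
    obtain ⟨F, hF⟩ := hS.elim_finite_subcover (fun s : S => V s) (fun s => (hV1 s).isOpen)
      (fun x hx => Set.mem_iUnion.2 ⟨⟨x, hx⟩, hV4 ⟨x, hx⟩⟩)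
    refine ⟨⋃ s ∈ F, V s, isClopen_biUnion_finset (fun s _ => hV1 s),
      isLowerSet_iUnion₂ (fun s _ => hV2 s), hF, ?_⟩
    intro hmem
    obtain ⟨s, -, hs⟩ := Set.mem_iUnion₂.1 hmem
    exact hV3 s hs
  choose L hL1 hL2 hL3 hL4 using step1
  obtain ⟨F, hF⟩ := hT.elim_finite_subcover (fun t : T => (L t)ᶜ)
    (fun t => (hL1 t).compl.isOpen)
    (fun x hx => Set.mem_iUnion.2 ⟨⟨x, hx⟩, hL4 ⟨x, hx⟩⟩)
  refine ⟨⋂ t ∈ F, L t, isClopen_biInter_finset (fun t _ => hL1 t),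
    isLowerSet_iInter₂ (fun t _ => hL2 t), Set.subset_iInter₂ (fun t _ => hL3 t), ?_⟩
  intro t ht hmem
  obtain ⟨i, hiF, hi⟩ := Set.mem_iUnion₂.1 (hF ht)
  exact hi (Set.mem_iInter₂.1 hmem i hiF)

/-- Extension of compatible traces on two closed sets to a single clopen lower set. -/
lemma priestley_trace {C D a c : Set X} (hC : IsClosed C) (hD : IsClosed D)
    (ha : IsClopen a) (halow : IsLowerSet a) (hc : IsClopen c) (hclow : IsLowerSet c)
    (h2 : ∀ ⦃d v⦄, d ∈ D → d ≤ v → v ∈ C → v ∈ a → d ∈ c)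
    (h3 : ∀ ⦃p d⦄, p ∈ C → p ≤ d → d ∈ D → d ∈ c → p ∈ a) :
    ∃ b : Set X, IsClopen b ∧ IsLowerSet b ∧ b ∩ C = a ∩ C ∧ b ∩ D = c ∩ D := by
  have hsep : ∀ t ∈ (C \ a) ∪ (D \ c), ∀ s ∈ a ∩ C ∪ c ∩ D, ¬ t ≤ s := by
    rintro t (⟨htC, hta⟩ | ⟨htD, htc⟩) s (⟨hsa, hsC⟩ | ⟨hsc, hsD⟩) hle
    · exact hta (halow hle hsa)
    · exact hta (h3 htC hle hsD hsc)
    · exact htc (h2 htD hle hsC hsa)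
    · exact htc (hclow hle hsc)
  obtain ⟨L, hL, hLlow, hSL, hLT⟩ := priestley_sep (S := a ∩ C ∪ c ∩ D)
    (T := (C \ a) ∪ (D \ c))
    (((ha.isClosed.inter hC).union (hc.isClosed.inter hD)).isCompact)
    (((hC.sdiff ha.isOpen).union (hD.sdiff hc.isOpen)).isCompact) hsep
  refine ⟨L, hL, hLlow, ?_, ?_⟩
  · ext x
    constructor
    · rintro ⟨hxL, hxC⟩
      by_cases hxa : x ∈ a
      · exact ⟨hxa, hxC⟩
      · exact absurd hxL (hLT x (Or.inl ⟨hxC, hxa⟩))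
    · rintro ⟨hxa, hxC⟩
      exact ⟨hSL (Or.inl ⟨hxa, hxC⟩), hxC⟩
  · ext x
    constructor
    · rintro ⟨hxL, hxD⟩
      by_cases hxc : x ∈ c
      · exact ⟨hxc, hxD⟩
      · exact absurd hxL (hLT x (Or.inr ⟨hxD, hxc⟩))
    · rintro ⟨hxc, hxD⟩
      exact ⟨hSL (Or.inr ⟨hxc, hxD⟩), hxD⟩


/-- If `(x₁, x₂)` is a "minimal failing pair" for closed sets `C`, `D`, then the congruences
`θ_C`, `θ_D` do not commute: an explicit witness. -/
lemma priestley_noncommute {C D : Set X} (hC : IsClosed C) (hD : IsClosed D)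
    {x₁ x₂ : X} (hx₁ : x₁ ∈ C) (hx₂ : x₂ ∈ D) (hle : x₁ ≤ x₂)
    (star : ∀ v u, x₁ ≤ v → v ≤ u → u ≤ x₂ → v ∈ D → u ∈ C → False) :
    ∃ a c : {a : Set X // IsClopen a ∧ IsLowerSet a},
      (∃ b : {a : Set X // IsClopen a ∧ IsLowerSet a},
        a.1 ∩ C = b.1 ∩ C ∧ b.1 ∩ D = c.1 ∩ D) ∧
      ¬ (∃ b : {a : Set X // IsClopen a ∧ IsLowerSet a},
        a.1 ∩ D = b.1 ∩ D ∧ b.1 ∩ C = c.1 ∩ C) := by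
  classical
  -- N = C ∩ ↑(D ∩ ↑x₁)
  set N : Set X := C ∩ {y : X | ∃ s ∈ D ∩ Set.Ici x₁, s ≤ y} with hN
  have hNclosed : IsClosed N :=
    hC.inter (priestley_isClosed_up (hD.inter (priestley_isClosed_Ici x₁)))
  -- L₁ : clopen lower set containing x₂ and avoiding N
  have hsep1 : ∀ t ∈ N, ∀ s ∈ ({x₂} : Set X), ¬ t ≤ s := by
    rintro t ⟨htC, d, ⟨hdD, hdx₁⟩, hdt⟩ s rfl hts
    exact star d t hdx₁ hdt hts hdD htC
  obtain ⟨L₁, hL₁, hL₁low, hx₂L₁, hL₁N⟩ := priestley_sep (S := {x₂}) (T := N)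
    isCompact_singleton hNclosed.isCompact hsep1
  -- S_h and T_h
  set Sh : Set X := (D ∩ {y : X | ∃ s ∈ C ∩ L₁ᶜ, s ≤ y}) ∪ {x₁} with hSh
  set Th : Set X := D ∩ {y : X | ∃ s ∈ C ∩ L₁, y ≤ s} with hTh
  have hShclosed : IsClosed Sh :=
    (hD.inter (priestley_isClosed_up (hC.inter hL₁.compl.isClosed))).union isClosed_singleton
  have hThclosed : IsClosed Th := hD.inter (priestley_isClosed_down (hC.inter hL₁.isClosed))
  have hsep2 : ∀ t ∈ Sh, ∀ s ∈ Th, ¬ t ≤ s := by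
    rintro t ht s ⟨hsD, v, ⟨hvC, hvL₁⟩, hsv⟩ hts
    rcases ht with ⟨htD, v', ⟨hv'C, hv'L₁⟩, hv't⟩ | hteq
    · exact hv'L₁ (hL₁low (le_trans hv't (le_trans hts hsv)) hvL₁)
    · rw [Set.mem_singleton_iff] at hteq
      subst hteq
      exact hL₁N v ⟨hvC, s, ⟨hsD, hts⟩, hsv⟩ hvL₁
  obtain ⟨L₂, hL₂, hL₂low, hThL₂, hL₂Sh⟩ := priestley_sep (S := Th) (T := Sh)
    hThclosed.isCompact hShclosed.isCompact hsep2
  -- the witnesses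
  refine ⟨⟨L₁, hL₁, hL₁low⟩, ⟨L₂, hL₂, hL₂low⟩, ?_, ?_⟩
  · -- existence of b
    have h2 : ∀ ⦃d v : X⦄, d ∈ D → d ≤ v → v ∈ C → v ∈ L₁ → d ∈ L₂ := by
      intro d v hdD hdv hvC hvL₁
      exact hThL₂ ⟨hdD, v, ⟨hvC, hvL₁⟩, hdv⟩
    have h3 : ∀ ⦃p d : X⦄, p ∈ C → p ≤ d → d ∈ D → d ∈ L₂ → p ∈ L₁ := by
      intro p d hpC hpd hdD hdL₂
      by_contra hpL₁
      exact hL₂Sh d (Or.inl ⟨hdD, p, ⟨hpC, hpL₁⟩, hpd⟩) hdL₂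
    obtain ⟨b, hb, hblow, hbC, hbD⟩ := priestley_trace (a := L₁) (c := L₂) hC hD
      hL₁ hL₁low hL₂ hL₂low h2 h3
    exact ⟨⟨b, hb, hblow⟩, hbC.symm, hbD⟩
  · -- refutation
    rintro ⟨b', h1, h2⟩
    have hx₂b' : x₂ ∈ b'.1 := by
      have : x₂ ∈ L₁ ∩ D := ⟨hx₂L₁ rfl, hx₂⟩
      rw [h1] at this
      exact this.1
    have hx₁b' : x₁ ∈ b'.1 := b'.2.2 hle hx₂b'
    have : x₁ ∈ L₂ ∩ C := by
      rw [← h2]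
      exact ⟨hx₁b', hx₁⟩
    exact hL₂Sh x₁ (Or.inr rfl) this.1


/-- There is a minimal "failing pair", given one failing pair. -/
lemma exists_minimal_pair {C D : Set X} (hC : IsClosed C) (hD : IsClosed D)
    {x₁ x₂ : X} (hx₁ : x₁ ∈ C) (hx₂ : x₂ ∈ D) (hle : x₁ ≤ x₂)
    (hfail : ∀ z, x₁ ≤ z → z ≤ x₂ → z ∈ C → z ∈ D → False) :
    ∃ y₁ y₂ : X, y₁ ≤ y₂ ∧
      ((y₁ ∈ C ∧ y₂ ∈ D ∧ ∀ v u, y₁ ≤ v → v ≤ u → u ≤ y₂ → v ∈ D → u ∈ C → False) ∨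
       (y₁ ∈ D ∧ y₂ ∈ C ∧ ∀ v u, y₁ ≤ v → v ≤ u → u ≤ y₂ → v ∈ C → u ∈ D → False)) := by
  classical
  set P : Set (X × X) := {p | (p.1 ∈ C ∧ p.2 ∈ D ∨ p.1 ∈ D ∧ p.2 ∈ C) ∧ p.1 ≤ p.2 ∧
      ∀ z, p.1 ≤ z → z ≤ p.2 → z ∈ C → z ∈ D → False} with hPdef
  have hP0 : ((x₁, x₂) : X × X) ∈ P := ⟨Or.inl ⟨hx₁, hx₂⟩, hle, hfail⟩
  let r : ↥P → ↥P → Prop := fun p q => p.1.1 ≤ q.1.1 ∧ q.1.2 ≤ p.1.2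
  have hrtrans : ∀ {a b c : ↥P}, r a b → r b c → r a c :=
    fun h1 h2 => ⟨h1.1.trans h2.1, h2.2.trans h1.2⟩
  haveI : Nonempty ↥P := ⟨⟨(x₁, x₂), hP0⟩⟩
  -- the closed "interval" sets
  let Gset : X × X → Set X × Set X → Set (X × X) := fun p E =>
    {z | z.1 ∈ E.1 ∧ z.2 ∈ E.2 ∧ p.1 ≤ z.1 ∧ z.1 ≤ z.2 ∧ z.2 ≤ p.2}
  have hGclosed : ∀ (p : X × X) (E : Set X × Set X), IsClosed E.1 → IsClosed E.2 →
      IsClosed (Gset p E) := by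
    intro p E hE1 hE2
    refine IsClosed.inter (hE1.preimage continuous_fst) ?_
    refine IsClosed.inter (hE2.preimage continuous_snd) ?_
    refine IsClosed.inter ((priestley_isClosed_Ici p.1).preimage continuous_fst) ?_
    exact IsClosed.inter priestley_isClosed_le
      ((priestley_isClosed_Iic p.2).preimage continuous_snd)
  have hGmono : ∀ (p q : X × X) (E : Set X × Set X), p.1 ≤ q.1 → q.2 ≤ p.2 →
      Gset q E ⊆ Gset p E := by
    rintro p q E h1 h2 z ⟨hz1, hz2, hz3, hz4, hz5⟩
    exact ⟨hz1, hz2, h1.trans hz3, hz4, hz5.trans h2⟩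
  -- chains are bounded
  have hbound : ∀ c : Set ↥P, IsChain r c → ∃ ub, ∀ a ∈ c, r a ub := by
    intro c hchain
    rcases c.eq_empty_or_nonempty with rfl | ⟨p₀₀, hp₀₀⟩
    · exact ⟨⟨(x₁, x₂), hP0⟩, by simp⟩
    have bound : ∀ E : Set X × Set X, IsClosed E.1 → IsClosed E.2 →
        (E.1 = C ∧ E.2 = D ∨ E.1 = D ∧ E.2 = C) →
        (∀ p ∈ c, ∃ q ∈ c, r p q ∧ q.1.1 ∈ E.1 ∧ q.1.2 ∈ E.2) →
        ∃ ub, ∀ a ∈ c, r a ub := by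
      intro E hE1 hE2 hor hcof
      haveI : Nonempty ↥c := ⟨⟨p₀₀, hp₀₀⟩⟩
      have hne : ∀ p : ↥c, (Gset p.1.1 E).Nonempty := by
        rintro ⟨p, hp⟩
        obtain ⟨q, hqc, hrpq, hq1, hq2⟩ := hcof p hp
        exact ⟨q.1, hq1, hq2, hrpq.1, q.2.2.1, hrpq.2⟩
      have hdir : Directed (· ⊇ ·) (fun p : ↥c => Gset p.1.1 E) := by
        rintro ⟨p, hp⟩ ⟨p', hp'⟩
        rcases eq_or_ne p p' with rfl | hne'
        · exact ⟨⟨p, hp⟩, le_refl _, le_refl _⟩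
        rcases hchain hp hp' hne' with h | h
        · exact ⟨⟨p', hp'⟩, hGmono _ _ _ h.1 h.2, le_refl _⟩
        · exact ⟨⟨p, hp⟩, le_refl _, hGmono _ _ _ h.1 h.2⟩
      obtain ⟨z, hz⟩ := IsCompact.nonempty_iInter_of_directed_nonempty_isCompact_isClosed
        (fun p : ↥c => Gset p.1.1 E) hdir hne
        (fun p => (hGclosed _ _ hE1 hE2).isCompact) (fun p => hGclosed _ _ hE1 hE2)
      have hzmem : ∀ p : ↥c, z ∈ Gset p.1.1 E := fun p =>
        Set.mem_iInter.1 hz p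
      have hzP : z ∈ P := by
        obtain ⟨hz1, hz2, hz3, hz4, hz5⟩ := hzmem ⟨p₀₀, hp₀₀⟩
        refine ⟨?_, hz4, ?_⟩
        · rcases hor with ⟨e1, e2⟩ | ⟨e1, e2⟩
          · exact Or.inl ⟨e1 ▸ hz1, e2 ▸ hz2⟩
          · exact Or.inr ⟨e1 ▸ hz1, e2 ▸ hz2⟩
        · intro w hw1 hw2 hwC hwD
          exact p₀₀.2.2.2 w (hz3.trans hw1) (hw2.trans hz5) hwC hwD
      refine ⟨⟨z, hzP⟩, ?_⟩
      intro a ha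
      obtain ⟨-, -, h3, -, h5⟩ := hzmem ⟨a, ha⟩
      exact ⟨h3, h5⟩
    by_cases hcof : ∀ p ∈ c, ∃ q ∈ c, r p q ∧ q.1.1 ∈ C ∧ q.1.2 ∈ D
    · exact bound (C, D) hC hD (Or.inl ⟨rfl, rfl⟩) hcof
    · push_neg at hcof
      obtain ⟨p₀, hp₀c, hp₀⟩ := hcof
      refine bound (D, C) hD hC (Or.inr ⟨rfl, rfl⟩) ?_
      have horient : ∀ q ∈ c, r p₀ q → q.1.1 ∈ D ∧ q.1.2 ∈ C := by
        intro q hq hrq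
        rcases q.2.1 with ⟨hq1, hq2⟩ | hDC
        · exact absurd hq2 (hp₀ q hq hrq hq1)
        · exact hDC
      intro p hp
      rcases eq_or_ne p p₀ with rfl | hne'
      · exact ⟨p, hp, ⟨le_rfl, le_rfl⟩, horient p hp ⟨le_rfl, le_rfl⟩⟩
      rcases hchain hp hp₀c hne' with h | h
      · exact ⟨p₀, hp₀c, h, horient p₀ hp₀c ⟨le_rfl, le_rfl⟩⟩
      · exact ⟨p, hp, ⟨le_rfl, le_rfl⟩, horient p hp h⟩
  obtain ⟨m, hm⟩ := exists_maximal_of_chains_bounded hbound hrtrans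
  refine ⟨m.1.1, m.1.2, m.2.2.1, ?_⟩
  have hmfail := m.2.2.2
  rcases m.2.1 with ⟨hm1, hm2⟩ | ⟨hm1, hm2⟩
  · refine Or.inl ⟨hm1, hm2, ?_⟩
    intro v u h1 h2 h3 hvD huC
    have hnewP : ((v, u) : X × X) ∈ P :=
      ⟨Or.inr ⟨hvD, huC⟩, h2, fun w hw1 hw2 hwC hwD =>
        hmfail w (h1.trans hw1) (hw2.trans h3) hwC hwD⟩
    have hrmax := hm ⟨(v, u), hnewP⟩ ⟨h1, h3⟩
    have hv : v = m.1.1 := le_antisymm hrmax.1 h1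
    exact hmfail m.1.1 le_rfl m.2.2.1 hm1 (hv ▸ hvD)
  · refine Or.inr ⟨hm1, hm2, ?_⟩
    intro v u h1 h2 h3 hvC huD
    have hnewP : ((v, u) : X × X) ∈ P :=
      ⟨Or.inl ⟨hvC, huD⟩, h2, fun w hw1 hw2 hwC hwD =>
        hmfail w (h1.trans hw1) (hw2.trans h3) hwC hwD⟩
    have hrmax := hm ⟨(v, u), hnewP⟩ ⟨h1, h3⟩
    have hv : v = m.1.1 := le_antisymm hrmax.1 h1
    exact hmfail m.1.1 le_rfl m.2.2.1 (hv ▸ hvC) hm1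


end PriestleyAux

/-- Let `X` be a Priestley space, `(Y, τ, ≤)` a compact ordered space, and
`q : X → Y` continuous for the lower topology `τ^↓` on `Y`. Then `q` is interpolating
if and only if for all `τ^↓`-open `U₁, U₂ ⊆ Y` the congruences `θ_{q⁻¹(Y∖U₁)}` and
`θ_{q⁻¹(Y∖U₂)}` on the lattice of clopen lower sets of `X` commute. -/
theorem stmt11 {X Y : Type*} [TopologicalSpace X] [CompactSpace X] [PartialOrder X]
    [PriestleySpace X]
    [TopologicalSpace Y] [CompactSpace Y] [T2Space Y] [PartialOrder Y]
    [OrderClosedTopology Y]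
    (q : X → Y) (hq : @Continuous X Y _ (lowTop Y) q) :
    Interpolating q ↔
      ∀ U₁ U₂ : Set Y, IsOpen U₁ → IsLowerSet U₁ → IsOpen U₂ → IsLowerSet U₂ →
        SetoidCommute (thetaC (q ⁻¹' U₁ᶜ)) (thetaC (q ⁻¹' U₂ᶜ)) := by
  classical
  have hopen : ∀ U : Set Y, IsOpen U → IsLowerSet U → IsClosed (q ⁻¹' Uᶜ) := by
    intro U hU hUl
    have h : IsOpen (q ⁻¹' U) := continuous_def.1 hq U (show @IsOpen Y (lowTop Y) U from ⟨hU, hUl⟩)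
    rw [Set.preimage_compl]
    exact h.isClosed_compl
  constructor
  · -- interpolating implies commuting
    intro hint U₁ U₂ hU₁ hU₁l hU₂ hU₂l
    have key : ∀ V₁ V₂ : Set Y, IsOpen V₁ → IsLowerSet V₁ → IsOpen V₂ → IsLowerSet V₂ →
        ∀ a c b : {a : Set X // IsClopen a ∧ IsLowerSet a},
        a.1 ∩ q ⁻¹' V₁ᶜ = b.1 ∩ q ⁻¹' V₁ᶜ → b.1 ∩ q ⁻¹' V₂ᶜ = c.1 ∩ q ⁻¹' V₂ᶜ →
        ∃ b' : {a : Set X // IsClopen a ∧ IsLowerSet a},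
          a.1 ∩ q ⁻¹' V₂ᶜ = b'.1 ∩ q ⁻¹' V₂ᶜ ∧ b'.1 ∩ q ⁻¹' V₁ᶜ = c.1 ∩ q ⁻¹' V₁ᶜ := by
      intro V₁ V₂ hV₁ hV₁l hV₂ hV₂l a c b hab hbc
      set C : Set X := q ⁻¹' V₁ᶜ with hCdef
      set D : Set X := q ⁻¹' V₂ᶜ with hDdef
      have h2 : ∀ ⦃d v : X⦄, d ∈ C → d ≤ v → v ∈ D → v ∈ a.1 → d ∈ c.1 := by
        intro d v hdC hdv hvD hva
        obtain ⟨z, hz1, hz2, hz3, hz4⟩ := hint d v hdv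
        have hzC : z ∈ C := fun hzU => hdC (hV₁l hz3 hzU)
        have hzD : z ∈ D := fun hzU => hvD (hV₂l hz4 hzU)
        have hza : z ∈ a.1 := a.2.2 hz2 hva
        have hzb : z ∈ b.1 ∩ C := by rw [← hab]; exact ⟨hza, hzC⟩
        have hzc : z ∈ c.1 ∩ D := by rw [← hbc]; exact ⟨hzb.1, hzD⟩
        exact c.2.2 hz1 hzc.1
      have h3 : ∀ ⦃p d : X⦄, p ∈ D → p ≤ d → d ∈ C → d ∈ c.1 → p ∈ a.1 := by
        intro p d hpD hpd hdC hdc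
        obtain ⟨z, hz1, hz2, hz3, hz4⟩ := hint p d hpd
        have hzD : z ∈ D := fun hzU => hpD (hV₂l hz3 hzU)
        have hzC : z ∈ C := fun hzU => hdC (hV₁l hz4 hzU)
        have hzc : z ∈ c.1 := c.2.2 hz2 hdc
        have hzb : z ∈ b.1 ∩ D := by rw [hbc]; exact ⟨hzc, hzD⟩
        have hza : z ∈ a.1 ∩ C := by rw [hab]; exact ⟨hzb.1, hzC⟩
        exact a.2.2 hz1 hza.1
      obtain ⟨b', hb', hb'low, hb'D, hb'C⟩ := priestley_trace (C := D) (D := C)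
        (a := a.1) (c := c.1) (hopen V₂ hV₂ hV₂l) (hopen V₁ hV₁ hV₁l)
        a.2.1 a.2.2 c.2.1 c.2.2 h2 h3
      exact ⟨⟨b', hb', hb'low⟩, hb'D.symm, hb'C⟩
    intro a c
    constructor
    · rintro ⟨b, hab, hbc⟩
      obtain ⟨b', h1, h2⟩ := key U₁ U₂ hU₁ hU₁l hU₂ hU₂l a c b hab hbc
      exact ⟨b', h1, h2⟩
    · rintro ⟨b, hab, hbc⟩
      obtain ⟨b', h1, h2⟩ := key U₂ U₁ hU₂ hU₂l hU₁ hU₁l a c b hab hbc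
      exact ⟨b', h1, h2⟩
  · -- commuting implies interpolating
    intro hcomm
    by_contra hni
    rw [Interpolating] at hni
    push_neg at hni
    obtain ⟨x₁, x₂, hle, hz⟩ := hni
    have hIciLower : ∀ y : Y, IsLowerSet (Set.Ici y)ᶜ := by
      intro y s t hts hs hys
      exact hs (hys.trans hts)
    have hCclosed : IsClosed (q ⁻¹' Set.Ici (q x₁)) := by
      have h := hopen (Set.Ici (q x₁))ᶜ isClosed_Ici.isOpen_compl (hIciLower _)
      rwa [compl_compl] at h
    have hDclosed : IsClosed (q ⁻¹' Set.Ici (q x₂)) := by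
      have h := hopen (Set.Ici (q x₂))ᶜ isClosed_Ici.isOpen_compl (hIciLower _)
      rwa [compl_compl] at h
    have hx₁C : x₁ ∈ q ⁻¹' Set.Ici (q x₁) := le_rfl
    have hx₂D : x₂ ∈ q ⁻¹' Set.Ici (q x₂) := le_rfl
    have hfail : ∀ z, x₁ ≤ z → z ≤ x₂ →
        z ∈ q ⁻¹' Set.Ici (q x₁) → z ∈ q ⁻¹' Set.Ici (q x₂) → False := by
      intro z h1 h2 hC hD
      exact hz z h1 h2 hC hD
    obtain ⟨y₁, y₂, hle', hcase⟩ := exists_minimal_pair hCclosed hDclosed hx₁C hx₂D hle hfail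
    have hcomm' := hcomm (Set.Ici (q x₁))ᶜ (Set.Ici (q x₂))ᶜ
      isClosed_Ici.isOpen_compl (hIciLower _) isClosed_Ici.isOpen_compl (hIciLower _)
    rw [compl_compl, compl_compl] at hcomm'
    rcases hcase with ⟨h1, h2, hstar⟩ | ⟨h1, h2, hstar⟩
    · obtain ⟨a, c, hcomp, hncomp⟩ :=
        priestley_noncommute hCclosed hDclosed h1 h2 hle' hstar
      exact hncomp ((hcomm' a c).mp hcomp)
    · obtain ⟨a, c, hcomp, hncomp⟩ :=
        priestley_noncommute hDclosed hCclosed h1 h2 hle' hstar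
      exact hncomp ((hcomm' a c).mpr hcomp)
end

section
/- Let X and Y be sober topological spaces. The map sending a continuous function q : X → Y to the frame homomorphism Ω Y → Ω X given by U ↦ q^{-1}(U) is a bijection from the set of continuous functions X → Y onto the set of frame homomorphisms from Ω Y to Ω X. -/
open TopologicalSpace

/-- For sober spaces `X` and `Y`, the map sending a continuous function `q : X → Y`
to the frame homomorphism `Ω Y → Ω X`, `U ↦ q⁻¹(U)`, is a bijection from the
continuous functions `X → Y` onto the frame homomorphisms `Ω Y → Ω X`. -/
theorem stmt12 {X Y : Type*} [TopologicalSpace X] [TopologicalSpace Y]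
    [T0Space X] [QuasiSober X] [T0Space Y] [QuasiSober Y] :
    Function.Bijective
      (fun q : C(X, Y) => (Opens.comap q : FrameHom (Opens Y) (Opens X))) := by
  constructor
  · exact Opens.comap_injective
  · intro f
    -- For each `x`, the closed set of points all of whose neighborhoods `V` satisfy `x ∈ f V`.
    set C : X → Set Y := fun x => {y | ∀ V : Opens Y, y ∈ V → x ∈ f V} with hC
    have hCclosed : ∀ x, IsClosed (C x) := by
      intro x
      have : C x = (⋃ V ∈ {V : Opens Y | x ∉ f V}, (V : Set Y))ᶜ := by
        ext y
        constructor
        · intro h hy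
          simp only [Set.mem_iUnion, Set.mem_setOf_eq] at hy
          obtain ⟨V, hx, hyV⟩ := hy
          exact hx (h V hyV)
        · intro h V hyV
          by_contra hx
          exact h (Set.mem_biUnion hx hyV)
      rw [this]
      exact (isOpen_biUnion fun V _ => V.isOpen).isClosed_compl
    -- Key property: an open set meets `C x` iff `x ∈ f V`.
    have key : ∀ (x : X) (V : Opens Y), (C x ∩ (V : Set Y)).Nonempty ↔ x ∈ f V := by
      intro x V
      constructor
      · rintro ⟨y, hyC, hyV⟩
        exact hyC V hyV
      · intro hx
        by_contra h
        rw [Set.not_nonempty_iff_eq_empty] at h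
        -- Then `V ⊆ (C x)ᶜ = ⋃` of opens `W` with `x ∉ f W`.
        have hsub : V ≤ ⨆ W ∈ {W : Opens Y | x ∉ f W}, W := by
          intro y hyV
          have hyC : y ∉ C x := fun hy => Set.eq_empty_iff_forall_notMem.mp h y ⟨hy, hyV⟩
          simp only [hC, Set.mem_setOf_eq, not_forall] at hyC
          obtain ⟨W, hyW, hxW⟩ := hyC
          exact Opens.mem_iSup.mpr ⟨W, Opens.mem_iSup.mpr ⟨hxW, hyW⟩⟩
        have := OrderHomClass.mono f hsub hx
        simp only [map_iSup] at this
        obtain ⟨W, hW⟩ := Opens.mem_iSup.mp this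
        obtain ⟨hxW, hxfW⟩ := Opens.mem_iSup.mp hW
        exact hxW hxfW
    -- `C x` is irreducible.
    have hirr : ∀ x, IsIrreducible (C x) := by
      intro x
      constructor
      · simpa using (key x ⊤).mpr (by simp)
      · intro u v hu hv hCu hCv
        have h1 : x ∈ f ⟨u, hu⟩ := (key x ⟨u, hu⟩).mp hCu
        have h2 : x ∈ f ⟨v, hv⟩ := (key x ⟨v, hv⟩).mp hCv
        have h3 : x ∈ f (⟨u, hu⟩ ⊓ ⟨v, hv⟩) := by
          rw [map_inf]; exact ⟨h1, h2⟩
        exact (key x (⟨u, hu⟩ ⊓ ⟨v, hv⟩)).mpr h3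
    -- The generic points give a map `q : X → Y`.
    let q : X → Y := fun x => (hirr x).genericPoint
    have hq : ∀ x, closure ({q x} : Set Y) = C x := fun x =>
      (hirr x).closure_genericPoint (hCclosed x)
    -- `q x ∈ V ↔ x ∈ f V` for opens `V`.
    have hqmem : ∀ (x : X) (V : Opens Y), q x ∈ V ↔ x ∈ f V := by
      intro x V
      rw [← key x V, ← hq x]
      constructor
      · intro h
        exact ⟨q x, subset_closure rfl, h⟩
      · rintro ⟨y, hyc, hyV⟩
        rcases mem_closure_iff.mp hyc V V.isOpen hyV with ⟨z, hzV, hz⟩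
        rw [Set.mem_singleton_iff] at hz
        rwa [hz] at hzV
    have hqcont : Continuous q := by
      rw [continuous_def]
      intro s hs
      have : q ⁻¹' s = (f ⟨s, hs⟩ : Set X) := by
        ext x
        exact hqmem x ⟨s, hs⟩
      rw [this]
      exact (f ⟨s, hs⟩).isOpen
    refine ⟨⟨q, hqcont⟩, ?_⟩
    ext V x
    simpa using hqmem x V
end
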